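/- arXiv:cs/0604032 — 11 statements merged into one kernel-verified Lean document; each statement's English description precedes it below -/
import Mathlib

section
/- The homomorphism from the free group on the set of all finite tuples of real numbers to F that sends the generator corresponding to a tuple r to the element w_r is injective; in other words, the family (w_r), indexed by all finite real tuples r, is a free basis of the subgroup of F that it generates. Consequently, for every set A of finite real tuples and every finite real tuple r, the element w_r lies in the subgroup of F generated by {w_s : s ∈ A} if and only if r ∈ A. -/
/-- The free group `F` on the generating set
`X = {x_{(i,s)} : i ∈ ℕ, s ∈ ℝ} ∪ {y}`. -/
abbrev F : Type := FreeGroup ((ℕ × ℝ) ⊕ Unit)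

/-- The generator `x_{(i,s)}`. -/
def xg (p : ℕ × ℝ) : F := FreeGroup.of (Sum.inl p)

/-- The generator `y`. -/
def yg : F := FreeGroup.of (Sum.inr ())

/-- The word `x_{(1,r_1)} ⋯ x_{(k,r_k)}` for a tuple `r = (r_1, …, r_k)`. -/
def cword (r : List ℝ) : F :=
  (List.zipWith (fun i a => xg (i + 1, a)) (List.range r.length) r).prod

/-- The word `w_r = x_{(k,r_k)}⁻¹ ⋯ x_{(1,r_1)}⁻¹ · y · x_{(1,r_1)} ⋯ x_{(k,r_k)}`. -/
def wword (r : List ℝ) : F := (cword r)⁻¹ * yg * cword r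

/-!
Let `FreeGroup X` act on `FreeGroup (FreeGroup X)` by left multiplication on the generators and
send `x ↦ inr x`, `y ↦ inl (of 1)` into the semidirect product. A conjugate `g⁻¹ y g` with
`g ∈ ⟨X⟩` lands on the free generator `inl (of g⁻¹)`, so distinct conjugates are sent to distinct
free generators and hence form a free basis. The words `x_{(1,r_1)} ⋯ x_{(k,r_k)}` are positive,
hence reduced, so distinct tuples give distinct conjugating elements. Finally, in a free group
`of a` lies in the subgroup generated by `of '' A` only if `a ∈ A`: otherwise the endomorphism
killing `A` would kill `of a`.
-/

namespace FreeGroup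

variable {α β ι G : Type*}

theorem toWord_prod_map_of [DecidableEq α] (L : List α) :
    toWord (L.map of).prod = L.map (·, true) := by
  have hmk : (L.map of).prod = mk (L.map (·, true)) := by
    induction L with
    | nil => rfl
    | cons a L ih => rw [List.map_cons, List.prod_cons, ih]; rfl
  rw [hmk, toWord_mk, IsReduced.reduce_eq]
  simpa [IsReduced, List.isChain_map] using (List.pairwise_of_forall fun _ _ => trivial).isChain

theorem prod_map_of_injective : Function.Injective fun L : List α => (L.map of).prod := by
  classical
  intro L L' h
  have hword := congrArg toWord h
  simp only [toWord_prod_map_of] at hword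
  exact List.map_injective_iff.2 (fun a b hab => congrArg Prod.fst hab) hword

def freeGroupCongrHom : Equiv.Perm α →* MulAut (FreeGroup α) where
  toFun := freeGroupCongr
  map_one' := freeGroupCongr_refl
  map_mul' e f := (freeGroupCongr_trans f e).symm

def mulLeftOnGenerators : FreeGroup α →* MulAut (FreeGroup (FreeGroup α)) :=
  freeGroupCongrHom.comp (MulAction.toPermHom _ _)

theorem mulLeftOnGenerators_of (g h : FreeGroup α) :
    mulLeftOnGenerators g (of h) = of (g * h) :=
  rfl

def conjByInl (b : β) (g : FreeGroup α) : FreeGroup (α ⊕ β) :=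
  (map Sum.inl g)⁻¹ * of (Sum.inr b) * map Sum.inl g

/-- The Reidemeister–Schreier rewriting for the normal closure of the `β`-generators. -/
def toSemidirect :
    FreeGroup (α ⊕ β) →* FreeGroup (FreeGroup α) ⋊[mulLeftOnGenerators] FreeGroup α :=
  lift (Sum.elim (fun a => SemidirectProduct.inr (of a)) fun _ => SemidirectProduct.inl (of 1))

theorem toSemidirect_map_inl (g : FreeGroup α) :
    toSemidirect (β := β) (map Sum.inl g) = SemidirectProduct.inr g := by
  have : (toSemidirect (α := α) (β := β)).comp (map Sum.inl) = SemidirectProduct.inr :=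
    ext_hom _ _ fun a => by simp [toSemidirect]
  exact DFunLike.congr_fun this g

theorem toSemidirect_conjByInl (b : β) (g : FreeGroup α) :
    toSemidirect (conjByInl b g) = SemidirectProduct.inl (of g⁻¹) := by
  have hy : toSemidirect (of (Sum.inr b) : FreeGroup (α ⊕ β)) = SemidirectProduct.inl (of 1) := by
    simp [toSemidirect]
  rw [conjByInl, _root_.map_mul, _root_.map_mul, _root_.map_inv, toSemidirect_map_inl, hy,
    ← _root_.map_inv SemidirectProduct.inr, ← SemidirectProduct.inl_aut_inv, ← _root_.map_inv,
    mulLeftOnGenerators_of, mul_one]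

theorem lift_conjByInl_injective (b : β) :
    Function.Injective (lift (conjByInl (α := α) b)) := by
  have h : toSemidirect.comp (lift (conjByInl (α := α) b)) =
      SemidirectProduct.inl.comp (map (·⁻¹)) :=
    ext_hom _ _ fun g => by simp [toSemidirect_conjByInl]
  refine Function.Injective.of_comp (f := toSemidirect) ?_
  rw [← MonoidHom.coe_comp, h, MonoidHom.coe_comp]
  exact SemidirectProduct.inl_injective.comp (map_injective inv_injective)

theorem of_mem_closure_image_iff {A : Set α} {a : α} :
    of a ∈ Subgroup.closure (of '' A) ↔ a ∈ A := by
  refine ⟨fun h => ?_, fun h => Subgroup.subset_closure ⟨a, h, rfl⟩⟩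
  by_contra ha
  classical
  let kill : FreeGroup α →* FreeGroup α := lift fun b => if b ∈ A then 1 else of b
  have hle : Subgroup.closure (of '' A) ≤ kill.ker :=
    (Subgroup.closure_le _).2 (by rintro _ ⟨b, hb, rfl⟩; simp [kill, hb])
  exact of_ne_one a (by simpa [kill, ha] using hle h)

theorem mem_closure_image_iff_of_injective_lift [Group G] {f : ι → G}
    (hf : Function.Injective (lift f)) {A : Set ι} {i : ι} :
    f i ∈ Subgroup.closure (f '' A) ↔ i ∈ A := by
  rw [← lift_apply_of (f := f), show f '' A = lift f '' (of '' A) by simp [Set.image_image],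
    ← MonoidHom.map_closure, Subgroup.mem_map_iff_mem hf, of_mem_closure_image_iff]

end FreeGroup

open FreeGroup

def xword (r : List ℝ) : FreeGroup (ℕ × ℝ) :=
  (List.zipWith (fun i a => of (i + 1, a)) (List.range r.length) r).prod

theorem map_inl_xword (r : List ℝ) : map Sum.inl (xword r) = cword r := by
  simp [xword, cword, map_list_prod, List.map_zipWith, xg]

theorem xword_injective : Function.Injective xword := by
  intro r s h
  have hpairs : ∀ r : List ℝ, xword r =
      ((((List.range r.length).zip r).map fun p => (p.1 + 1, p.2)).map of).prod := by
    intro r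
    simp [xword, List.map_map, ← List.map_uncurry_zip_eq_zipWith, Function.comp_def,
      Function.uncurry_def]
  rw [hpairs, hpairs] at h
  have hzip := List.map_injective_iff.2 (fun p q hpq => by simpa [Prod.ext_iff] using hpq)
    (prod_map_of_injective h)
  simpa [List.map_snd_zip] using congrArg (List.map Prod.snd) hzip

theorem wword_eq_conjByInl (r : List ℝ) : wword r = conjByInl () (xword r) := by
  rw [wword, conjByInl, map_inl_xword, yg]

/-- The homomorphism from the free group on all finite real tuples to `F` sending the
generator corresponding to `r` to `w_r` is injective (the `w_r` freely generate the
subgroup they generate); consequently membership of `w_r` in the subgroup generated by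
`{w_s : s ∈ A}` is equivalent to `r ∈ A`. -/
theorem wword_free_and_mem_closure_iff :
    Function.Injective (FreeGroup.lift wword : FreeGroup (List ℝ) →* F) ∧
      ∀ (A : Set (List ℝ)) (r : List ℝ),
        wword r ∈ Subgroup.closure (wword '' A) ↔ r ∈ A := by
  have hfree : Function.Injective (lift wword : FreeGroup (List ℝ) →* F) := by
    have h : lift wword = (lift (conjByInl ())).comp (map xword) :=
      ext_hom _ _ fun r => by simp [wword_eq_conjByInl]
    rw [h]
    exact (lift_conjByInl_injective ()).comp (map_injective xword_injective)
  exact ⟨hfree, fun _ _ => mem_closure_image_iff_of_injective_lift hfree⟩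
end

section
/- Let d ≤ D be natural numbers, let B ⊆ ℝ^D, and let A := {(s_1, …, s_d) : (s_1, …, s_D) ∈ B} ⊆ ℝ^d be the projection of B to the first d coordinates. Let H_{≤d} be the subgroup of F generated by {y} ∪ {x_{(i,s)} : 1 ≤ i ≤ d, s ∈ ℝ} and H_{>d} the subgroup generated by {x_{(i,s)} : i > d, s ∈ ℝ}. Then the subgroup of F generated by {w_r : r ∈ A} equals the intersection of the subgroup generated by {w_s : s ∈ B} ∪ H_{>d} with H_{≤d}. -/
/-- `w_r` for a tuple `r ∈ ℝ^k` given as a function `Fin k → ℝ`. -/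
def wFin {k : ℕ} (r : Fin k → ℝ) : F := wword (List.ofFn r)

/-!
Let `π_d : F → F` be the retraction that kills every `x_{(i,s)}` with `i > d` and fixes the
other generators. It fixes `H_{≤d}` pointwise, kills `H_{>d}`, and sends `w_s` to `w_r`, where
`r` is the projection of `s`. So every `g` in the intersection satisfies
`g = π_d g ∈ π_d ⟨w_s, H_{>d}⟩ = ⟨w_r⟩`. Conversely `w_r ∈ H_{≤d}`, and `w_r = t w_s t⁻¹`
where `t = x_{(d+1,s_{d+1})} ⋯ x_{(D,s_D)} ∈ H_{>d}`.
-/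

/-- `cwordFrom n l` is `x_{(n+1,l_0)} x_{(n+2,l_1)} ⋯`, so `cword = cwordFrom 0`. -/
def cwordFrom (n : ℕ) : List ℝ → F
  | [] => 1
  | a :: t => xg (n + 1, a) * cwordFrom (n + 1) t

lemma zipWith_range_prod_eq_cwordFrom (n : ℕ) (l : List ℝ) :
    (List.zipWith (fun i a => xg (n + i + 1, a)) (List.range l.length) l).prod =
      cwordFrom n l := by
  induction l generalizing n with
  | nil => simp [cwordFrom]
  | cons a t ih =>
    rw [List.length_cons, List.range_succ_eq_map, List.zipWith_cons_cons,
      List.zipWith_map_left, List.prod_cons, cwordFrom, ← ih (n + 1)]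
    simp only [Nat.succ_eq_add_one, Nat.add_zero, Nat.add_assoc, Nat.add_comm 1]

lemma cword_eq_cwordFrom (l : List ℝ) : cword l = cwordFrom 0 l := by
  rw [cword]
  simpa only [Nat.zero_add] using zipWith_range_prod_eq_cwordFrom 0 l

lemma cwordFrom_append (n : ℕ) (l₁ l₂ : List ℝ) :
    cwordFrom n (l₁ ++ l₂) = cwordFrom n l₁ * cwordFrom (n + l₁.length) l₂ := by
  induction l₁ generalizing n with
  | nil => simp [cwordFrom]
  | cons a t ih =>
    rw [List.cons_append, cwordFrom, cwordFrom, ih (n + 1), mul_assoc, List.length_cons,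
      Nat.add_comm t.length 1, Nat.add_assoc]

/-- `H_{≤d}`. -/
def lowSubgroup (d : ℕ) : Subgroup F :=
  Subgroup.closure ({yg} ∪ {g : F | ∃ (i : ℕ) (s : ℝ), 1 ≤ i ∧ i ≤ d ∧ g = xg (i, s)})

/-- `H_{>d}`. -/
def highSubgroup (d : ℕ) : Subgroup F :=
  Subgroup.closure {g : F | ∃ (i : ℕ) (s : ℝ), d < i ∧ g = xg (i, s)}

lemma cwordFrom_mem_lowSubgroup {d n : ℕ} {l : List ℝ} (h : n + l.length ≤ d) :
    cwordFrom n l ∈ lowSubgroup d := by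
  induction l generalizing n with
  | nil => exact one_mem _
  | cons a t ih =>
    rw [List.length_cons] at h
    exact mul_mem (Subgroup.subset_closure (Or.inr ⟨n + 1, a, by omega, by omega, rfl⟩))
      (ih (by omega))

lemma cwordFrom_mem_highSubgroup {d n : ℕ} (h : d ≤ n) (l : List ℝ) :
    cwordFrom n l ∈ highSubgroup d := by
  induction l generalizing n with
  | nil => exact one_mem _
  | cons a t ih =>
    exact mul_mem (Subgroup.subset_closure ⟨n + 1, a, by omega, rfl⟩) (ih (by omega))

lemma wFin_mem_lowSubgroup {k : ℕ} (r : Fin k → ℝ) : wFin r ∈ lowSubgroup k := by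
  have hc : cwordFrom 0 (List.ofFn r) ∈ lowSubgroup k :=
    cwordFrom_mem_lowSubgroup (by simp)
  rw [wFin, wword, cword_eq_cwordFrom]
  exact mul_mem (mul_mem (inv_mem hc) (Subgroup.subset_closure (Or.inl rfl))) hc

lemma ofFn_comp_castLE {d D : ℕ} (hdD : d ≤ D) (b : Fin D → ℝ) :
    List.ofFn (b ∘ Fin.castLE hdD) = (List.ofFn b).take d := by
  rw [← Fin.ofFn_take_eq_take_ofFn hdD b]
  rfl

lemma exists_mem_highSubgroup_wFin_comp_castLE_eq_conj {d D : ℕ} (hdD : d ≤ D)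
    (b : Fin D → ℝ) :
    ∃ t ∈ highSubgroup d, wFin (b ∘ Fin.castLE hdD) = t * wFin b * t⁻¹ := by
  refine ⟨cwordFrom d ((List.ofFn b).drop d), cwordFrom_mem_highSubgroup le_rfl _, ?_⟩
  have hsplit : cwordFrom 0 (List.ofFn b) =
      cwordFrom 0 (List.ofFn (b ∘ Fin.castLE hdD)) * cwordFrom d ((List.ofFn b).drop d) := by
    conv_lhs => rw [← List.take_append_drop d (List.ofFn b)]
    rw [cwordFrom_append, ofFn_comp_castLE hdD, List.length_take, List.length_ofFn,
      Nat.min_eq_left hdD, Nat.zero_add]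
  rw [wFin, wFin, wword, wword, cword_eq_cwordFrom, cword_eq_cwordFrom, hsplit]
  group

/-- The retraction `π_d` of `F` onto `H_{≤d}`. -/
def truncate (d : ℕ) : F →* F :=
  FreeGroup.lift fun
    | Sum.inl (i, s) => if i ≤ d then xg (i, s) else 1
    | Sum.inr _ => yg

@[simp] lemma truncate_xg (d i : ℕ) (s : ℝ) :
    truncate d (xg (i, s)) = if i ≤ d then xg (i, s) else 1 := FreeGroup.lift_apply_of

@[simp] lemma truncate_yg (d : ℕ) : truncate d yg = yg := FreeGroup.lift_apply_of

lemma highSubgroup_le_ker_truncate (d : ℕ) : highSubgroup d ≤ (truncate d).ker := by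
  rw [highSubgroup, Subgroup.closure_le]
  rintro _ ⟨i, s, hi, rfl⟩
  simp [MonoidHom.mem_ker, Nat.not_le.mpr hi]

lemma truncate_eq_self_of_mem_lowSubgroup {d : ℕ} {g : F} (hg : g ∈ lowSubgroup d) :
    truncate d g = g := by
  induction hg using Subgroup.closure_induction with
  | mem x hx =>
    rcases hx with rfl | ⟨i, s, -, hid, rfl⟩
    · exact truncate_yg d
    · rw [truncate_xg, if_pos hid]
  | one => exact map_one _
  | mul x y _ _ hx hy => rw [map_mul, hx, hy]
  | inv x _ hx => rw [map_inv, hx]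

lemma truncate_cwordFrom (d n : ℕ) (l : List ℝ) :
    truncate d (cwordFrom n l) = cwordFrom n (l.take (d - n)) := by
  induction l generalizing n with
  | nil => simp [cwordFrom]
  | cons a t ih =>
    by_cases h : n < d
    · rw [cwordFrom, map_mul, truncate_xg, if_pos (by omega),
        show d - n = (d - (n + 1)) + 1 by omega, List.take_succ_cons, cwordFrom, ih (n + 1)]
    · rw [MonoidHom.mem_ker.mp
          (highSubgroup_le_ker_truncate d (cwordFrom_mem_highSubgroup (by omega) _)),
        Nat.sub_eq_zero_of_le (by omega), List.take_zero, cwordFrom]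

lemma truncate_wFin {d D : ℕ} (hdD : d ≤ D) (b : Fin D → ℝ) :
    truncate d (wFin b) = wFin (b ∘ Fin.castLE hdD) := by
  rw [wFin, wFin, wword, wword, cword_eq_cwordFrom, cword_eq_cwordFrom, map_mul, map_mul,
    map_inv, truncate_cwordFrom, truncate_yg, Nat.sub_zero, ofFn_comp_castLE hdD]

lemma Subgroup.map_mem_closure_image_of_mem_closure_union {G H : Type*} [Group G] [Group H]
    (f : G →* H) {S : Set G} {K : Subgroup G} (hK : K ≤ f.ker) {g : G}
    (hg : g ∈ closure (S ∪ K)) : f g ∈ closure (f '' S) := by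
  have hmap : (closure (S ∪ K)).map f ≤ closure (f '' S) := by
    rw [MonoidHom.map_closure, closure_le, Set.image_union, Set.union_subset_iff]
    refine ⟨subset_closure, ?_⟩
    rintro _ ⟨k, hk, rfl⟩
    rw [MonoidHom.mem_ker.mp (hK hk)]
    exact one_mem _
  exact hmap ⟨g, hg, rfl⟩

/-- Let `d ≤ D`, `B ⊆ ℝ^D` and let `A ⊆ ℝ^d` be the projection of `B` to the first `d`
coordinates.  With `H_{≤d}` the subgroup generated by `y` and the `x_{(i,s)}` with
`1 ≤ i ≤ d`, and `H_{>d}` the subgroup generated by the `x_{(i,s)}` with `i > d`, the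
subgroup generated by `{w_r : r ∈ A}` equals the intersection of the subgroup generated
by `{w_s : s ∈ B} ∪ H_{>d}` with `H_{≤d}`. -/
theorem closure_wword_proj_eq_inf
    {d D : ℕ} (hdD : d ≤ D) (B : Set (Fin D → ℝ)) :
    Subgroup.closure (wFin '' ((fun b : Fin D → ℝ => b ∘ Fin.castLE hdD) '' B)) =
      Subgroup.closure ((wFin '' B) ∪
          (Subgroup.closure {g : F | ∃ (i : ℕ) (s : ℝ), d < i ∧ g = xg (i, s)} : Set F)) ⊓
        Subgroup.closure
          ({yg} ∪ {g : F | ∃ (i : ℕ) (s : ℝ), 1 ≤ i ∧ i ≤ d ∧ g = xg (i, s)}) := by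
  change _ = Subgroup.closure (wFin '' B ∪ highSubgroup d) ⊓ lowSubgroup d
  apply le_antisymm
  · rw [Subgroup.closure_le]
    rintro _ ⟨_, ⟨b, hb, rfl⟩, rfl⟩
    obtain ⟨t, ht, hconj⟩ := exists_mem_highSubgroup_wFin_comp_castLE_eq_conj hdD b
    have htmem : t ∈ Subgroup.closure (wFin '' B ∪ highSubgroup d) :=
      Subgroup.subset_closure (Or.inr ht)
    refine Subgroup.mem_inf.mpr ⟨?_, wFin_mem_lowSubgroup _⟩
    rw [hconj]
    exact mul_mem (mul_mem htmem (Subgroup.subset_closure (Or.inl ⟨b, hb, rfl⟩)))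
      (inv_mem htmem)
  · rintro g ⟨hg, hg_low⟩
    have himage : truncate d '' (wFin '' B) = wFin '' ((· ∘ Fin.castLE hdD) '' B) := by
      simp only [Set.image_image, truncate_wFin hdD]
    rw [← truncate_eq_self_of_mem_lowSubgroup hg_low, ← himage]
    exact Subgroup.map_mem_closure_image_of_mem_closure_union _
      (highSubgroup_le_ker_truncate d) hg
end

section
/- Let d : ℕ → ℕ and for each n ∈ ℕ let A_n ⊆ ℝ^{d(n)} be an arbitrary set of tuples. For a finite real tuple r set w_{n,r} := x_{(0,n)}^{-1} · w_r · x_{(0,n)} (the generator x_{(0,n)} placed outermost). Then the intersection of the subgroup of F generated by {w_{n,r} : n ∈ ℕ, r ∈ A_n} ∪ {x_{(0,n)} : n ∈ ℕ} with the subgroup of F generated by {y} ∪ {x_{(i,s)} : i ≥ 1, s ∈ ℝ} equals the subgroup of F generated by {w_r : ∃ n ∈ ℕ, r ∈ A_n}. -/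
/-- The word `w_{n,r} := x_{(0,n)}⁻¹ · w_r · x_{(0,n)}` (the generator `x_{(0,n)}`
placed outermost). -/
def wn (n : ℕ) (r : List ℝ) : F := (xg (0, (n : ℝ)))⁻¹ * wword r * xg (0, (n : ℝ))

/-!
The retraction `ρ` of `F` that kills every `x_{(0,s)}` and fixes every other generator
is the identity on the subgroup `K = ⟨y, x_{(i,s)} : i ≥ 1⟩`, and sends `w_{n,r}` to `w_r`
and `x_{(0,n)}` to `1`. Hence every `g` in `H ⊓ K`, where `H` is the first subgroup,
satisfies `g = ρ g ∈ ρ(H) ≤ ⟨w_r⟩`. Conversely `w_r ∈ K`, and `w_r` is the conjugate of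
`w_{n,r}` by `x_{(0,n)}`, so it lies in `H`.
-/

namespace FreeGroup

variable {α : Type*}

/-- The retraction of `FreeGroup α` onto the subgroup generated by `of '' s`. -/
noncomputable def retract (s : Set α) : FreeGroup α →* FreeGroup α :=
  lift (s.mulIndicator of)

theorem retract_of_mem {s : Set α} {a : α} (ha : a ∈ s) : retract s (of a) = of a := by
  rw [retract, lift_apply_of, Set.mulIndicator_of_mem ha]

theorem retract_of_notMem {s : Set α} {a : α} (ha : a ∉ s) : retract s (of a) = 1 := by
  rw [retract, lift_apply_of, Set.mulIndicator_of_notMem ha]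

theorem retract_eq_self_of_mem_closure {s : Set α} {g : FreeGroup α}
    (hg : g ∈ Subgroup.closure (of '' s)) : retract s g = g := by
  have hle : Subgroup.closure (of '' s) ≤ MonoidHom.eqLocus (retract s) (MonoidHom.id _) := by
    rw [Subgroup.closure_le]
    rintro _ ⟨a, ha, rfl⟩
    exact retract_of_mem ha
  exact hle hg

end FreeGroup

theorem Subgroup.inf_le_map_of_forall_apply_eq {G : Type*} [Group G] {H K : Subgroup G}
    {f : G →* G} (hf : ∀ g ∈ K, f g = g) : H ⊓ K ≤ H.map f :=
  fun g hg => ⟨g, hg.1, hf g hg.2⟩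

def positiveLevelGens : Set ((ℕ × ℝ) ⊕ Unit) := {a | ∀ t : ℝ, a ≠ Sum.inl (0, t)}

open Subgroup in
theorem closure_positiveLevel_le :
    closure ({yg} ∪ {g : F | ∃ (i : ℕ) (s : ℝ), 1 ≤ i ∧ g = xg (i, s)}) ≤
      closure (FreeGroup.of '' positiveLevelGens) := by
  refine closure_mono ?_
  rintro _ (rfl | ⟨i, s, hi, rfl⟩)
  · exact ⟨Sum.inr (), by simp [positiveLevelGens], rfl⟩
  · refine ⟨Sum.inl (i, s), fun t h => ?_, rfl⟩
    simp only [Sum.inl.injEq, Prod.mk.injEq] at h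
    omega

theorem retract_xg_zero (t : ℝ) : FreeGroup.retract positiveLevelGens (xg (0, t)) = 1 :=
  FreeGroup.retract_of_notMem fun h => h t rfl

theorem cword_mem_closure (r : List ℝ) :
    cword r ∈ Subgroup.closure ({yg} ∪ {g : F | ∃ (i : ℕ) (s : ℝ), 1 ≤ i ∧ g = xg (i, s)}) := by
  refine Subgroup.list_prod_mem _ fun x hx => ?_
  obtain ⟨k, _, rfl⟩ := List.getElem_of_mem hx
  rw [List.getElem_zipWith]
  exact Subgroup.subset_closure (Or.inr ⟨_, _, Nat.le_add_left 1 _, rfl⟩)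

theorem wword_mem_closure (r : List ℝ) :
    wword r ∈ Subgroup.closure ({yg} ∪ {g : F | ∃ (i : ℕ) (s : ℝ), 1 ≤ i ∧ g = xg (i, s)}) :=
  mul_mem (mul_mem (inv_mem (cword_mem_closure r)) (Subgroup.subset_closure (Or.inl rfl)))
    (cword_mem_closure r)

theorem retract_wn (n : ℕ) (r : List ℝ) :
    FreeGroup.retract positiveLevelGens (wn n r) = wword r := by
  have hw : FreeGroup.retract positiveLevelGens (wword r) = wword r :=
    FreeGroup.retract_eq_self_of_mem_closure (closure_positiveLevel_le (wword_mem_closure r))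
  rw [wn, map_mul, map_mul, map_inv, retract_xg_zero, hw, inv_one, one_mul, mul_one]

theorem wword_eq_conj_wn (n : ℕ) (r : List ℝ) :
    wword r = xg (0, (n : ℝ)) * wn n r * (xg (0, (n : ℝ)))⁻¹ := by
  rw [wn]
  group

open Subgroup in
theorem closure_wn_inf_eq_closure_union_general
    (A : ℕ → Set (List ℝ)) :
    Subgroup.closure
        ({g : F | ∃ (n : ℕ) (r : List ℝ), r ∈ A n ∧ g = wn n r} ∪
         {g : F | ∃ n : ℕ, g = xg (0, (n : ℝ))}) ⊓
      Subgroup.closure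
        ({yg} ∪ {g : F | ∃ (i : ℕ) (s : ℝ), 1 ≤ i ∧ g = xg (i, s)}) =
      Subgroup.closure {g : F | ∃ (n : ℕ), ∃ r ∈ A n, g = wword r} := by
  set S := {g : F | ∃ (n : ℕ) (r : List ℝ), r ∈ A n ∧ g = wn n r} ∪
    {g : F | ∃ n : ℕ, g = xg (0, (n : ℝ))}
  set ρ := FreeGroup.retract positiveLevelGens
  apply le_antisymm
  · calc closure S ⊓ _ ≤ (closure S).map ρ :=
          inf_le_map_of_forall_apply_eq fun g hg =>
            FreeGroup.retract_eq_self_of_mem_closure (closure_positiveLevel_le hg)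
      _ = closure (ρ '' S) := MonoidHom.map_closure _ _
      _ ≤ _ := by
          rw [closure_le]
          rintro _ ⟨_, ⟨n, r, hr, rfl⟩ | ⟨n, rfl⟩, rfl⟩
          · rw [retract_wn]
            exact subset_closure ⟨n, r, hr, rfl⟩
          · rw [retract_xg_zero]
            exact one_mem _
  · rw [closure_le]
    rintro _ ⟨n, r, hr, rfl⟩
    have hx : xg (0, (n : ℝ)) ∈ Subgroup.closure S := subset_closure (Or.inr ⟨n, rfl⟩)
    have hw : wn n r ∈ Subgroup.closure S := subset_closure (Or.inl ⟨n, r, hr, rfl⟩)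
    refine mem_inf.mpr ⟨?_, wword_mem_closure r⟩
    rw [wword_eq_conj_wn n r]
    exact mul_mem (mul_mem hx hw) (inv_mem hx)

/-- For a family `A_n ⊆ ℝ^{d(n)}` of sets of tuples, the intersection of the subgroup
generated by `{w_{n,r} : n ∈ ℕ, r ∈ A_n} ∪ {x_{(0,n)} : n ∈ ℕ}` with the subgroup
generated by `{y} ∪ {x_{(i,s)} : i ≥ 1, s ∈ ℝ}` equals the subgroup generated by
`{w_r : ∃ n, r ∈ A_n}`. -/
theorem closure_wn_inf_eq_closure_union
    (d : ℕ → ℕ) (A : ℕ → Set (List ℝ)) (hA : ∀ n, ∀ r ∈ A n, r.length = d n) :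
    Subgroup.closure
        ({g : F | ∃ (n : ℕ) (r : List ℝ), r ∈ A n ∧ g = wn n r} ∪
         {g : F | ∃ n : ℕ, g = xg (0, (n : ℝ))}) ⊓
      Subgroup.closure
        ({yg} ∪ {g : F | ∃ (i : ℕ) (s : ℝ), 1 ≤ i ∧ g = xg (i, s)}) =
      Subgroup.closure {g : F | ∃ (n : ℕ), ∃ r ∈ A n, g = wword r} :=
  closure_wn_inf_eq_closure_union_general A
end

section
/- Let G be a group, A and B subgroups of G, φ : A ≃ B an isomorphism, and let G* be the HNN extension of G relative to A, B, φ, with stable letter t and canonical embedding of : G → G*, so that t · of(a) · t^{-1} = of(φ(a)) for all a ∈ A. Then for every g ∈ G, the element t · of(g) · t^{-1} lies in the image of `of` if and only if g ∈ A. -/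
/-! If `g ∉ toSubgroup A B u`, the word `t^u · g · t^(-u)` is reduced, so by Britton's lemma
(`HNNExtension.ReducedWord.toList_eq_nil_of_mem_of_range`) its product does not lie in `G`.
If `g ∈ toSubgroup A B u`, the defining relation conjugates it back into `G`. -/

namespace HNNExtension

variable {G : Type*} [Group G] {A B : Subgroup G} (φ : A ≃* B)

theorem toSubgroupEquiv_eq_conj (u : ℤˣ) (a : toSubgroup A B u) :
    (of (toSubgroupEquiv φ u a : G) : HNNExtension G A B φ) =
      t ^ (u : ℤ) * of (a : G) * t ^ (-(u : ℤ)) := by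
  rcases Int.units_eq_one_or u with rfl | rfl
  · rw [Units.val_one, zpow_one, zpow_neg_one]
    exact equiv_eq_conj a
  · change _ = t ^ (-1 : ℤ) * _ * t ^ (1 : ℤ)
    rw [zpow_neg_one, zpow_one]
    exact equiv_symm_eq_conj a

theorem mem_toSubgroup_of_zpow_t_mul_of_mul_zpow_t_neg_mem_range {u : ℤˣ} {g : G}
    (h : t ^ (u : ℤ) * of g * t ^ (-(u : ℤ)) ∈ (of : G →* HNNExtension G A B φ).range) :
    g ∈ toSubgroup A B u := by
  by_contra hg
  let w : NormalWord.ReducedWord G A B :=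
    { head := 1
      toList := [(u, g), (-u, 1)]
      chain := List.isChain_pair.2 fun hmem ↦ absurd hmem hg }
  have hw : w.prod φ = t ^ (u : ℤ) * of g * t ^ (-(u : ℤ)) := by
    simp [NormalWord.ReducedWord.prod, w, mul_assoc]
  simpa [w] using ReducedWord.toList_eq_nil_of_mem_of_range φ w (hw ▸ h)

theorem zpow_t_mul_of_mul_zpow_t_neg_mem_range_iff (u : ℤˣ) (g : G) :
    t ^ (u : ℤ) * of g * t ^ (-(u : ℤ)) ∈ (of : G →* HNNExtension G A B φ).range ↔
      g ∈ toSubgroup A B u :=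
  ⟨mem_toSubgroup_of_zpow_t_mul_of_mul_zpow_t_neg_mem_range φ,
    fun hg ↦ ⟨_, toSubgroupEquiv_eq_conj φ u ⟨g, hg⟩⟩⟩

end HNNExtension

/-- In the HNN extension `G*` of `G` relative to subgroups `A`, `B` and an isomorphism
`φ : A ≃* B`, with stable letter `t` and canonical embedding `of : G → G*`, the element
`t · of(g) · t⁻¹` lies in the image of `of` if and only if `g ∈ A`. -/
theorem t_mul_of_mul_t_inv_mem_range_iff
    {G : Type*} [Group G] (A B : Subgroup G) (φ : A ≃* B) (g : G) :
    (HNNExtension.t : HNNExtension G A B φ) * HNNExtension.of g * HNNExtension.t⁻¹ ∈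
        (HNNExtension.of : G →* HNNExtension G A B φ).range ↔ g ∈ A := by
  simpa using HNNExtension.zpow_t_mul_of_mul_zpow_t_neg_mem_range_iff φ 1 g
end

section
/- Let G be a group, A a subgroup of G, and let G* be the HNN extension of G relative to A, A and the identity isomorphism of A, with stable letter t and canonical embedding of : G → G*, so that t · of(a) · t^{-1} = of(a) for all a ∈ A. Then for every g ∈ G, the elements t and of(g) commute in G* (i.e. t · of(g) = of(g) · t) if and only if g ∈ A. -/
namespace HNNExtension

variable {G : Type*} [Group G] {A B : Subgroup G}

/-- For `g ∉ A` the word `t g t⁻¹` is reduced, so Britton's lemma keeps it out of the base group. -/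
theorem t_mul_of_mul_inv_t_mem_range_iff (φ : A ≃* B) (g : G) :
    t * of g * t⁻¹ ∈ (of : G →* HNNExtension G A B φ).range ↔ g ∈ A := by
  constructor
  · intro hmem
    by_contra hg
    let w : NormalWord.ReducedWord G A B :=
      { head := 1
        toList := [(1, g), (-1, 1)]
        chain := List.isChain_pair.2 fun hgA => absurd hgA hg }
    have hw : w.prod φ = t * of g * t⁻¹ := by
      simp [NormalWord.ReducedWord.prod, w, zpow_neg]
    have hnil := ReducedWord.toList_eq_nil_of_mem_of_range φ w (hw ▸ hmem)
    simp [w] at hnil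
  · intro hg
    refine ⟨φ ⟨g, hg⟩, ?_⟩
    rw [t_mul_of (φ := φ) ⟨g, hg⟩, mul_inv_cancel_right]

end HNNExtension

open HNNExtension in
/-- In the HNN extension of `G` relative to a subgroup `A`, `A` and the identity
isomorphism of `A`, with stable letter `t` and canonical embedding `of`, the stable
letter `t` commutes with `of(g)` if and only if `g ∈ A`. -/
theorem t_commutes_iff_mem
    {G : Type*} [Group G] (A : Subgroup G) (g : G) :
    (HNNExtension.t : HNNExtension G A A (MulEquiv.refl A)) * HNNExtension.of g =
        HNNExtension.of g * HNNExtension.t ↔ g ∈ A := by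
  constructor
  · intro hcomm
    rw [← t_mul_of_mul_inv_t_mem_range_iff (MulEquiv.refl A), hcomm, mul_inv_cancel_right]
    exact ⟨g, rfl⟩
  · intro hg
    simpa using t_mul_of (φ := MulEquiv.refl A) ⟨g, hg⟩
end

section
/- The intersection of the subgroup of P generated by the set s·j(G)·s^{-1} ∪ t·j(G)·t^{-1} (that is, all elements s·j(g)·s^{-1} and t·j(g)·t^{-1} for g ∈ G) with the image j(G) equals the image under j of the subgroup of G generated by A ∪ B. -/
/-!
Write `H = ⟨A ∪ B⟩`. Since `s` centralises `j(A)` and `t` centralises `j(B)`, every `j(a)` with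
`a ∈ A ∪ B` is one of the generators, so `j(H)` lies in the intersection.

Conversely, let `G` act on any `X` and let `x ∈ X` be fixed by `A` and `B`; adjoin a point `∞`
fixed by `G`. The transposition `σ = (∞ x)` commutes with `A` and `B`, so letting `s` and `t` act
as `σ` extends the action of `G` to one of `P`. A generator `s j(g) s⁻¹` or `t j(g) t⁻¹` acts as `σ g σ`, which fixes `x`
because `g` fixes `∞`. Hence if `j(g)` lies in the subgroup generated by them, then `g` fixes `x`;
for `X = G ⧸ H` and `x = H` this says `g ∈ H`.
-/

/-- The HNN extension of `G` relative to a subgroup `A`, `A`, and the identity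
isomorphism of `A`. -/
abbrev GA (G : Type*) [Group G] (A : Subgroup G) : Type _ :=
  HNNExtension G A A (MulEquiv.refl A)

/-- The two-element family consisting of `G_A` and `G_B`. -/
def Kfam (G : Type*) [Group G] (A B : Subgroup G) : Bool → Type _ :=
  fun b => cond b (GA G A) (GA G B)

instance (G : Type*) [Group G] (A B : Subgroup G) : ∀ b, Group (Kfam G A B b)
  | true => inferInstanceAs (Group (GA G A))
  | false => inferInstanceAs (Group (GA G B))

/-- The canonical maps of `G` into `G_A` and `G_B`. -/
def ffam (G : Type*) [Group G] (A B : Subgroup G) : ∀ b, G →* Kfam G A B b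
  | true => (HNNExtension.of : G →* GA G A)
  | false => (HNNExtension.of : G →* GA G B)

/-- The amalgamated free product `P` of `G_A` and `G_B` over `G`. -/
abbrev Pushout (G : Type*) [Group G] (A B : Subgroup G) : Type _ :=
  Monoid.PushoutI (ffam G A B)

/-- The canonical map `j : G →* P`. -/
def jmap (G : Type*) [Group G] (A B : Subgroup G) : G →* Pushout G A B :=
  Monoid.PushoutI.base (ffam G A B)

/-- The image `s` in `P` of the stable letter of `G_A`. -/
def sletter (G : Type*) [Group G] (A B : Subgroup G) : Pushout G A B :=
  Monoid.PushoutI.of (φ := ffam G A B) true (HNNExtension.t : GA G A)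

/-- The image `t` in `P` of the stable letter of `G_B`. -/
def tletter (G : Type*) [Group G] (A B : Subgroup G) : Pushout G A B :=
  Monoid.PushoutI.of (φ := ffam G A B) false (HNNExtension.t : GA G B)

open Subgroup

namespace Equiv

variable {α : Type*} [DecidableEq α]

theorem commute_swap_of_apply_eq {f : Perm α} {a b : α} (ha : f a = a) (hb : f b = b) :
    Commute (swap a b) f := by
  have h := swap_apply_apply f a b
  rw [ha, hb, eq_mul_inv_iff_mul_eq] at h
  exact h

theorem swap_mul_mul_swap_apply_right {f : Perm α} {a : α} (ha : f a = a) (b : α) :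
    (swap a b * f * swap a b) b = b := by
  rw [Perm.mul_apply, Perm.mul_apply, swap_apply_right, ha, swap_apply_left]

end Equiv

theorem HNNExtension.map_of_eq_map_t_conj {G M : Type*} [Group G] [Group M] {A : Subgroup G}
    (f : HNNExtension G A A (MulEquiv.refl A) →* M) {a : G} (ha : a ∈ A) :
    f (of a) = f t * f (of a) * (f t)⁻¹ := by
  rw [← map_inv, ← map_mul, ← map_mul, ← equiv_eq_conj (φ := MulEquiv.refl A) ⟨a, ha⟩]
  rfl

section Pushout

variable {G : Type*} [Group G] (A B : Subgroup G)

def stableConjugates : Set (Pushout G A B) :=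
  {p | ∃ g : G, p = sletter G A B * jmap G A B g * (sletter G A B)⁻¹} ∪
    {p | ∃ g : G, p = tletter G A B * jmap G A B g * (tletter G A B)⁻¹}

variable {A B}

theorem jmap_eq_sletter_conj {a : G} (ha : a ∈ A) :
    jmap G A B a = sletter G A B * jmap G A B a * (sletter G A B)⁻¹ := by
  rw [jmap, ← Monoid.PushoutI.of_apply_eq_base (ffam G A B) true]
  exact HNNExtension.map_of_eq_map_t_conj (Monoid.PushoutI.of (φ := ffam G A B) true) ha

theorem jmap_eq_tletter_conj {b : G} (hb : b ∈ B) :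
    jmap G A B b = tletter G A B * jmap G A B b * (tletter G A B)⁻¹ := by
  rw [jmap, ← Monoid.PushoutI.of_apply_eq_base (ffam G A B) false]
  exact HNNExtension.map_of_eq_map_t_conj (Monoid.PushoutI.of (φ := ffam G A B) false) hb

theorem exists_pushout_hom {M : Type*} [Group M] (ρ : G →* M) (x : M)
    (hA : ∀ a ∈ A, Commute x (ρ a)) (hB : ∀ b ∈ B, Commute x (ρ b)) :
    ∃ Φ : Pushout G A B →* M,
      (∀ g, Φ (jmap G A B g) = ρ g) ∧ Φ (sletter G A B) = x ∧ Φ (tletter G A B) = x := by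
  have hxA (a : A) : x * ρ a = ρ (MulEquiv.refl A a) * x := hA a a.2
  have hxB (b : B) : x * ρ b = ρ (MulEquiv.refl B b) * x := hB b b.2
  let f : ∀ i, Kfam G A B i →* M
    | true => HNNExtension.lift ρ x hxA
    | false => HNNExtension.lift ρ x hxB
  have hf : ∀ i, (f i).comp (ffam G A B i) = ρ := by
    rintro (_ | _) <;> ext g
    exacts [HNNExtension.lift_of ρ x hxB g, HNNExtension.lift_of ρ x hxA g]
  exact ⟨Monoid.PushoutI.lift f ρ hf, Monoid.PushoutI.lift_base f ρ hf,
    (Monoid.PushoutI.lift_of f ρ hf _).trans (HNNExtension.lift_t _ _ _),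
    (Monoid.PushoutI.lift_of f ρ hf _).trans (HNNExtension.lift_t _ _ _)⟩

theorem smul_eq_of_jmap_mem_closure {X : Type*} [MulAction G X] {x : X}
    (hA : A ≤ MulAction.stabilizer G x) (hB : B ≤ MulAction.stabilizer G x) {g : G}
    (hg : jmap G A B g ∈ closure (stableConjugates A B)) : g • x = x := by
  classical
  let ρ := MulAction.toPermHom G (Option X)
  let σ := Equiv.swap none (some x)
  have hσ : ∀ h ∈ MulAction.stabilizer G x, Commute σ (ρ h) := fun h hh =>
    Equiv.commute_swap_of_apply_eq rfl (congrArg some hh)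
  obtain ⟨Φ, hΦj, hΦs, hΦt⟩ := exists_pushout_hom ρ σ (fun a ha => hσ a (hA ha))
    (fun b hb => hσ b (hB hb))
  have hconj (g : G) : (σ * ρ g * σ⁻¹) (some x) = some x := by
    rw [Equiv.swap_inv]
    exact Equiv.swap_mul_mul_swap_apply_right rfl _
  have hle : closure (stableConjugates A B) ≤
      (MulAction.stabilizer _ (some x)).comap Φ := by
    rw [closure_le]
    rintro _ (⟨g, rfl⟩ | ⟨g, rfl⟩) <;>
      simpa [MulAction.mem_stabilizer_iff, hΦj, hΦs, hΦt] using hconj g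
  have := hle hg
  rw [mem_comap, MulAction.mem_stabilizer_iff, hΦj] at this
  exact Option.some_injective _ this

end Pushout

/-- In the amalgamated free product `P` of the HNN extensions `G_A` and `G_B` over `G`,
the intersection of the subgroup generated by `s·j(G)·s⁻¹ ∪ t·j(G)·t⁻¹` with the image
`j(G)` equals the image under `j` of the subgroup of `G` generated by `A ∪ B`. -/
theorem closure_conj_inf_range_eq_map_closure
    {G : Type*} [Group G] (A B : Subgroup G) :
    Subgroup.closure
        ({p : Pushout G A B | ∃ g : G, p = sletter G A B * jmap G A B g * (sletter G A B)⁻¹} ∪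
         {p : Pushout G A B | ∃ g : G, p = tletter G A B * jmap G A B g * (tletter G A B)⁻¹}) ⊓
      (jmap G A B).range =
      Subgroup.map (jmap G A B) (Subgroup.closure ((A : Set G) ∪ (B : Set G))) := by
  set H := closure ((A : Set G) ∪ (B : Set G))
  apply le_antisymm
  · rintro _ ⟨hg, g, rfl⟩
    have hAH : A ≤ H := fun a ha => subset_closure (Or.inl ha)
    have hBH : B ≤ H := fun b hb => subset_closure (Or.inr hb)
    refine ⟨g, ?_, rfl⟩
    rw [← MulAction.stabilizer_quotient H] at hAH hBH ⊢
    exact smul_eq_of_jmap_mem_closure hAH hBH hg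
  · refine le_inf (map_le_iff_le_comap.2 ((closure_le _).2 ?_)) (map_le_range _ _)
    rintro a (ha | hb)
    · exact subset_closure (Or.inl ⟨a, jmap_eq_sletter_conj ha⟩)
    · exact subset_closure (Or.inr ⟨a, jmap_eq_tletter_conj hb⟩)
end

section
/- Let the generator set be ℝ ⊕ Unit, writing u(b) for the generator indexed by b ∈ ℝ and v for the extra generator; for a ≠ 0 define the word s(a) := v · u(1/a) · v · u(a) · v · u(1/a) in the free group. Let R be the union of the relator families SL1 := {u(b)·u(c)·u(b+c)^{-1} : b, c ∈ ℝ}, SL2 := {s(a)·s(b)·s(a·b)^{-1} : a, b ∈ ℝ, a ≠ 0, b ≠ 0}, SL3 := {v·v·s(−1)^{-1}}, and SL4 := {s(a)·u(b)·s(1/a)·u(b·a²)^{-1} : a ≠ 0, b ∈ ℝ}. Then the presented group ⟨ℝ ⊕ Unit | R⟩ is isomorphic to SL₂(ℝ) (Matrix.SpecialLinearGroup (Fin 2) ℝ), via the homomorphism induced by sending u(b) to the matrix [[1, b], [0, 1]] and v to the matrix [[0, 1], [−1, 0]]. -/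
/-- The generator `u(b)`, `b ∈ ℝ`. -/
def ugen (b : ℝ) : FreeGroup (ℝ ⊕ Unit) := FreeGroup.of (Sum.inl b)

/-- The extra generator `v`. -/
def vgen : FreeGroup (ℝ ⊕ Unit) := FreeGroup.of (Sum.inr ())

/-- The word `s(a) := v · u(1/a) · v · u(a) · v · u(1/a)`. -/
noncomputable def sword (a : ℝ) : FreeGroup (ℝ ⊕ Unit) :=
  vgen * ugen (1 / a) * vgen * ugen a * vgen * ugen (1 / a)

/-- The relators SL1–SL4 of the Weil presentation of `SL₂(ℝ)`. -/
def relsSL : Set (FreeGroup (ℝ ⊕ Unit)) :=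
  {g | ∃ b c : ℝ, g = ugen b * ugen c * (ugen (b + c))⁻¹} ∪
  {g | ∃ a b : ℝ, a ≠ 0 ∧ b ≠ 0 ∧ g = sword a * sword b * (sword (a * b))⁻¹} ∪
  {vgen * vgen * (sword (-1))⁻¹} ∪
  {g | ∃ a b : ℝ, a ≠ 0 ∧ g = sword a * ugen b * sword (1 / a) * (ugen (b * a ^ 2))⁻¹}

/-- The matrix `U(b) = [[1, b], [0, 1]]` as an element of `SL₂(ℝ)`. -/
def Umat (b : ℝ) : Matrix.SpecialLinearGroup (Fin 2) ℝ :=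
  ⟨!![1, b; 0, 1], by simp [Matrix.det_fin_two_of]⟩

/-- The matrix `V = [[0, 1], [−1, 0]]` as an element of `SL₂(ℝ)`. -/
def Vmat : Matrix.SpecialLinearGroup (Fin 2) ℝ :=
  ⟨!![0, 1; -1, 0], by norm_num [Matrix.det_fin_two_of]⟩

/-!
The assignment `u b ↦ U(b)`, `v ↦ V` kills the four relator families (direct matrix
computations), so it induces `toSL2 : ⟨ℝ ⊕ Unit | R⟩ →* SL₂(ℝ)`; the word `s a` maps to
`S(a) = diag(a, 1 / a)`. The Bruhat decomposition `!![a, b; 0, 1 / a] = S(a) U(b / a)` and,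
for `c ≠ 0`, `!![a, b; c, d] = U(a / c) V S(-c) U(d / c)` gives a section `normalForm` of
`toSL2`. The relations alone suffice to push a generator `g` through a normal-form word,
`normalForm (M * toSL2 g) = normalForm M * g`; since the generators generate, `normalForm` is
also a left inverse of `toSL2`.
-/

open scoped MatrixGroups

theorem Function.leftInverse_of_mul_generators {G H : Type*} [Group G] [Group H] (f : G →* H)
    (φ : H → G) {S : Set G} (hS : Subgroup.closure S = ⊤) (h₁ : φ 1 = 1)
    (hφ : ∀ h, ∀ g ∈ S, φ (h * f g) = φ h * g) : Function.LeftInverse φ f := by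
  suffices key : ∀ g, ∀ h, φ (h * f g) = φ h * g by
    intro g; simpa [h₁] using key g 1
  intro g
  induction (hS ▸ Subgroup.mem_top g : g ∈ Subgroup.closure S)
    using Subgroup.closure_induction with
  | mem g hg => exact fun h => hφ h g hg
  | one => simp
  | mul g₁ g₂ _ _ ih₁ ih₂ => intro h; rw [map_mul, ← mul_assoc, ih₂, ih₁, mul_assoc]
  | inv g _ ih =>
    intro h
    refine eq_mul_inv_of_mul_eq ?_
    rw [← ih, mul_assoc, ← map_mul, inv_mul_cancel, map_one, mul_one]

lemma Matrix.SpecialLinearGroup.det_fin_two_eq_one {R : Type*} [CommRing R] (M : SL(2, R)) :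
    M 0 0 * M 1 1 - M 0 1 * M 1 0 = 1 := by
  rw [← Matrix.det_fin_two, M.det_coe]

namespace WeilPresentation

def u (b : ℝ) : PresentedGroup relsSL := PresentedGroup.of (Sum.inl b)

def v : PresentedGroup relsSL := PresentedGroup.of (Sum.inr ())

noncomputable def s (a : ℝ) : PresentedGroup relsSL := v * u (1 / a) * v * u a * v * u (1 / a)

lemma u_mul_u (b c : ℝ) : u b * u c = u (b + c) :=
  PresentedGroup.mk_eq_mk_of_mul_inv_mem (Or.inl <| Or.inl <| Or.inl ⟨b, c, rfl⟩)

lemma s_mul_s {a b : ℝ} (ha : a ≠ 0) (hb : b ≠ 0) : s a * s b = s (a * b) :=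
  PresentedGroup.mk_eq_mk_of_mul_inv_mem (Or.inl <| Or.inl <| Or.inr ⟨a, b, ha, hb, rfl⟩)

lemma v_mul_v : v * v = s (-1) :=
  PresentedGroup.mk_eq_mk_of_mul_inv_mem (Or.inl <| Or.inr rfl)

lemma s_mul_u_mul_s_one_div {a : ℝ} (ha : a ≠ 0) (b : ℝ) :
    s a * u b * s (1 / a) = u (b * a ^ 2) :=
  PresentedGroup.mk_eq_mk_of_mul_inv_mem (Or.inr ⟨a, b, ha, rfl⟩)

lemma u_zero : u 0 = 1 := by
  simpa using u_mul_u 0 0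

lemma inv_u (b : ℝ) : (u b)⁻¹ = u (-b) :=
  inv_eq_of_mul_eq_one_right (by rw [u_mul_u, add_neg_cancel, u_zero])

lemma s_one : s 1 = 1 := by
  simpa using s_mul_s one_ne_zero one_ne_zero

lemma inv_s {a : ℝ} (ha : a ≠ 0) : (s a)⁻¹ = s (1 / a) :=
  inv_eq_of_mul_eq_one_right (by rw [s_mul_s ha (one_div_ne_zero ha), mul_one_div_cancel ha, s_one])

lemma s_mul_u {a : ℝ} (ha : a ≠ 0) (b : ℝ) : s a * u b = u (b * a ^ 2) * s a := by
  rw [← s_mul_u_mul_s_one_div ha, ← inv_s ha, inv_mul_cancel_right]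

lemma u_mul_s {a : ℝ} (ha : a ≠ 0) (b : ℝ) : u b * s a = s a * u (b / a ^ 2) := by
  rw [s_mul_u ha, div_mul_cancel₀ b (pow_ne_zero 2 ha)]

lemma inv_v : v⁻¹ = v * s (-1) :=
  inv_eq_of_mul_eq_one_right (by
    rw [← mul_assoc, v_mul_v, s_mul_s (by norm_num) (by norm_num), neg_one_mul, neg_neg, s_one])

/-- `v⁻¹ * s a * v` is `s (1 / a)` conjugated by `u (1 / a)`, which commutes past `s (1 / a)`. -/
lemma s_mul_v {a : ℝ} (ha : a ≠ 0) : s a * v = v * s (1 / a) := by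
  have : v⁻¹ * s a * v = u (1 / a) * s (1 / a) * u (-a) := by
    simp only [s, one_div_one_div, ← inv_u]; group
  have e : 1 / a / (1 / a) ^ 2 = a := by field_simp
  rw [u_mul_s (one_div_ne_zero ha), e, mul_assoc (s _), u_mul_u, add_neg_cancel, u_zero,
    mul_one] at this
  rw [← this]; group

lemma v_mul_u_mul_v {x : ℝ} (hx : x ≠ 0) :
    v * u x * v = u (-(1 / x)) * v * s (-x) * u (-(1 / x)) := by
  have : v * u x * v = (u (1 / x))⁻¹ * v⁻¹ * s x * (u (1 / x))⁻¹ := by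
    simp only [s]; group
  rw [this, inv_u, inv_v, ← neg_one_mul x, ← s_mul_s (by norm_num) hx]
  group

lemma coe_Umat (b : ℝ) : (Umat b : Matrix (Fin 2) (Fin 2) ℝ) = !![1, b; 0, 1] := rfl

lemma coe_Vmat : (Vmat : Matrix (Fin 2) (Fin 2) ℝ) = !![0, 1; -1, 0] := rfl

noncomputable def freeToSL2 : FreeGroup (ℝ ⊕ Unit) →* SL(2, ℝ) :=
  FreeGroup.lift (Sum.elim Umat fun _ => Vmat)

lemma freeToSL2_ugen (b : ℝ) : freeToSL2 (ugen b) = Umat b := FreeGroup.lift_apply_of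

lemma freeToSL2_vgen : freeToSL2 vgen = Vmat := FreeGroup.lift_apply_of

lemma coe_freeToSL2_sword {a : ℝ} (ha : a ≠ 0) :
    (freeToSL2 (sword a) : Matrix (Fin 2) (Fin 2) ℝ) = !![a, 0; 0, 1 / a] := by
  simp [sword, freeToSL2_ugen, freeToSL2_vgen, coe_Umat, coe_Vmat, field]

lemma freeToSL2_eq_one_of_mem {r : FreeGroup (ℝ ⊕ Unit)} (hr : r ∈ relsSL) :
    freeToSL2 r = 1 := by
  rcases hr with ((⟨b, c, rfl⟩ | ⟨a, b, ha, hb, rfl⟩) | rfl) | ⟨a, b, ha, rfl⟩ <;>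
    rw [map_mul, map_inv, mul_inv_eq_one] <;> apply Subtype.ext <;>
    simp only [map_mul, Matrix.SpecialLinearGroup.coe_mul, freeToSL2_ugen, freeToSL2_vgen,
      coe_Umat, coe_Vmat]
  · simp [add_comm]
  · simp [coe_freeToSL2_sword, ha, hb, mul_comm]
  · simp [coe_freeToSL2_sword]
  · simp [coe_freeToSL2_sword, ha, field]

noncomputable def toSL2 : PresentedGroup relsSL →* SL(2, ℝ) :=
  PresentedGroup.toGroup (f := Sum.elim Umat fun _ => Vmat) fun _ => freeToSL2_eq_one_of_mem

lemma toSL2_u (b : ℝ) : toSL2 (u b) = Umat b :=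
  PresentedGroup.toGroup.of fun _ => freeToSL2_eq_one_of_mem

lemma toSL2_v : toSL2 v = Vmat :=
  PresentedGroup.toGroup.of fun _ => freeToSL2_eq_one_of_mem

lemma coe_toSL2_s {a : ℝ} (ha : a ≠ 0) :
    (toSL2 (s a) : Matrix (Fin 2) (Fin 2) ℝ) = !![a, 0; 0, 1 / a] :=
  coe_freeToSL2_sword ha

noncomputable def bruhatWord (a b c d : ℝ) : PresentedGroup relsSL :=
  if c = 0 then s a * u (b / a) else u (a / c) * v * s (-c) * u (d / c)

lemma bruhatWord_mul_u {a b c d : ℝ} (hdet : a * d - b * c = 1) (x : ℝ) :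
    bruhatWord a (a * x + b) c (c * x + d) = bruhatWord a b c d * u x := by
  unfold bruhatWord
  split_ifs with hc
  · have ha : a ≠ 0 := by rintro rfl; simp [hc] at hdet
    rw [mul_assoc, u_mul_u, add_div, mul_div_cancel_left₀ x ha, add_comm]
  · rw [mul_assoc _ (u _), u_mul_u, add_div, mul_div_cancel_left₀ x hc, add_comm]

lemma bruhatCell_mul_v {a b c d : ℝ} (hc : c ≠ 0) (hd : d ≠ 0) (hdet : a * d - b * c = 1) :
    u (a / c) * v * s (-c) * u (d / c) * v = u (b / d) * v * s d * u (-(c / d)) := by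
  have hc' : -c ≠ 0 := neg_ne_zero.2 hc
  have hdc : d * c ≠ 0 := mul_ne_zero hd hc
  have e₀ : d / c * (-c) ^ 2 = d * c := by field_simp
  have e₁ : a / c + -(1 / (d * c)) = b / d := by field_simp; linear_combination hdet
  have e₂ : -(1 / (d * c)) / (1 / -c) ^ 2 = -(c / d) := by field_simp
  have e₃ : -(d * c) * (1 / -c) = d := by field_simp
  have h₁ : s (-c) * u (d / c) * v = u (d * c) * v * s (1 / -c) := by
    rw [s_mul_u hc', e₀, mul_assoc, s_mul_v hc', ← mul_assoc]
  calc u (a / c) * v * s (-c) * u (d / c) * v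
      = u (a / c) * v * (s (-c) * u (d / c) * v) := by group
    _ = u (a / c) * (v * u (d * c) * v) * s (1 / -c) := by rw [h₁]; group
    _ = u (a / c) * u (-(1 / (d * c))) * v * s (-(d * c)) * (u (-(1 / (d * c))) * s (1 / -c)) := by
        rw [v_mul_u_mul_v hdc]; group
    _ = u (b / d) * v * (s (-(d * c)) * s (1 / -c)) * u (-(c / d)) := by
        rw [u_mul_u, e₁, u_mul_s (one_div_ne_zero hc'), e₂]; group
    _ = u (b / d) * v * s d * u (-(c / d)) := by
        rw [s_mul_s (neg_ne_zero.2 hdc) (one_div_ne_zero hc'), e₃]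

lemma bruhatWord_mul_v {a b c d : ℝ} (hdet : a * d - b * c = 1) :
    bruhatWord (-b) a (-d) c = bruhatWord a b c d * v := by
  by_cases hc : c = 0
  · subst hc
    have hd : d ≠ 0 := by rintro rfl; simp at hdet
    obtain rfl : a = 1 / d := eq_one_div_of_mul_eq_one_left (by simpa using hdet)
    have e : b / (1 / d) * (1 / d) ^ 2 = -b / -d := by field_simp
    simp only [bruhatWord, neg_eq_zero, hd, ↓reduceIte, neg_neg, zero_div, u_zero, mul_one]
    rw [s_mul_u (one_div_ne_zero hd), e]
    simp only [mul_assoc]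
    rw [s_mul_v (one_div_ne_zero hd), one_div_one_div]
  by_cases hd : d = 0
  · subst hd
    obtain rfl : b = -(1 / c) := by field_simp; linear_combination -hdet
    have e₁ : a / (1 / c) * (1 / c) ^ 2 = a / c := by field_simp
    have e₂ : -1 * (1 / -c) = 1 / c := by field_simp
    simp only [bruhatWord, neg_zero, hc, ↓reduceIte, neg_neg, zero_div, u_zero, mul_one]
    rw [s_mul_u (one_div_ne_zero hc), e₁, mul_assoc _ (s _), s_mul_v (neg_ne_zero.2 hc),
      ← mul_assoc, mul_assoc _ v v, v_mul_v, mul_assoc,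
      s_mul_s (by norm_num) (one_div_ne_zero (neg_ne_zero.2 hc)), e₂]
  simp only [bruhatWord, hc, neg_eq_zero, hd, ↓reduceIte]
  rw [neg_div_neg_eq, neg_neg, div_neg]
  exact (bruhatCell_mul_v hc hd hdet).symm

lemma coe_toSL2_bruhatWord {a b c d : ℝ} (hdet : a * d - b * c = 1) :
    (toSL2 (bruhatWord a b c d) : Matrix (Fin 2) (Fin 2) ℝ) = !![a, b; c, d] := by
  unfold bruhatWord
  split_ifs with hc
  · subst hc
    have ha : a ≠ 0 := by rintro rfl; simp at hdet
    obtain rfl : d = 1 / a := eq_one_div_of_mul_eq_one_right (by simpa using hdet)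
    simp [toSL2_u, coe_toSL2_s ha, coe_Umat, field]
  · obtain rfl : b = (a * d - 1) / c := by field_simp; linear_combination -hdet
    simp [toSL2_u, toSL2_v, coe_toSL2_s (neg_ne_zero.2 hc), coe_Umat, coe_Vmat, field,
      ← sub_eq_add_neg]

noncomputable def normalForm (M : SL(2, ℝ)) : PresentedGroup relsSL :=
  bruhatWord (M 0 0) (M 0 1) (M 1 0) (M 1 1)

lemma normalForm_one : normalForm 1 = 1 := by
  simp [normalForm, bruhatWord, s_one, u_zero]

lemma normalForm_mul_Umat (M : SL(2, ℝ)) (x : ℝ) :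
    normalForm (M * Umat x) = normalForm M * u x := by
  unfold normalForm
  convert bruhatWord_mul_u M.det_fin_two_eq_one x using 2 <;> simp [coe_Umat, Matrix.mul_apply]

lemma normalForm_mul_Vmat (M : SL(2, ℝ)) : normalForm (M * Vmat) = normalForm M * v := by
  unfold normalForm
  convert bruhatWord_mul_v M.det_fin_two_eq_one using 2 <;> simp [coe_Vmat, Matrix.mul_apply]

lemma toSL2_normalForm (M : SL(2, ℝ)) : toSL2 (normalForm M) = M := by
  induction M using Matrix.SpecialLinearGroup.fin_two_induction with | h a b c d hdet =>
  exact Subtype.ext (coe_toSL2_bruhatWord hdet)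

lemma normalForm_toSL2 : Function.LeftInverse normalForm toSL2 := by
  refine Function.leftInverse_of_mul_generators toSL2 normalForm
    (PresentedGroup.closure_range_of relsSL) normalForm_one ?_
  rintro M _ ⟨b | _, rfl⟩
  · exact (congrArg (normalForm <| M * ·) (toSL2_u b)).trans (normalForm_mul_Umat M b)
  · exact (congrArg (normalForm <| M * ·) toSL2_v).trans (normalForm_mul_Vmat M)

end WeilPresentation

open WeilPresentation in
/-- The presented group `⟨ℝ ⊕ Unit | SL1 ∪ SL2 ∪ SL3 ∪ SL4⟩` is isomorphic to `SL₂(ℝ)`,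
via the homomorphism induced by `u(b) ↦ U(b)` and `v ↦ V`. -/
theorem presentedGroup_iso_SL2 :
    ∃ e : PresentedGroup relsSL ≃* Matrix.SpecialLinearGroup (Fin 2) ℝ,
      (∀ b : ℝ, e (PresentedGroup.of (Sum.inl b)) = Umat b) ∧
        e (PresentedGroup.of (Sum.inr ())) = Vmat :=
  ⟨{ toSL2 with
      invFun := normalForm
      left_inv := normalForm_toSL2
      right_inv := toSL2_normalForm }, toSL2_u, toSL2_v⟩
end

section
/- Let the generator set be {(p,q) ∈ ℤ × ℤ : q ≠ 0} (write x_{(p,q)} for the corresponding generator) and let the relator set be R := {x_{(p,q)} · x_{(a,b)} · x_{(p·b + a·q, q·b)}^{-1} : p, q, a, b ∈ ℤ, q ≠ 0, b ≠ 0} ∪ {x_{(p,q)} · x_{(n·p, n·q)}^{-1} : p, q, n ∈ ℤ, q ≠ 0, n ≠ 0}. Then the presented group on these generators and relators is isomorphic to the additive group of rational numbers (Multiplicative ℚ), via the homomorphism induced by x_{(p,q)} ↦ p/q. -/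
/-- The generating set `{(p,q) ∈ ℤ × ℤ : q ≠ 0}`. -/
abbrev GenQ : Type := {p : ℤ × ℤ // p.2 ≠ 0}

/-- The relator set: `x_{(p,q)}·x_{(a,b)}·x_{(pb+aq, qb)}⁻¹` for `q,b ≠ 0`, together
with `x_{(p,q)}·x_{(np,nq)}⁻¹` for `q,n ≠ 0`. -/
def relsQ2 : Set (FreeGroup GenQ) :=
  {g | ∃ (p q a b : ℤ) (hq : q ≠ 0) (hb : b ≠ 0),
    g = FreeGroup.of (⟨(p, q), hq⟩ : GenQ) * FreeGroup.of (⟨(a, b), hb⟩ : GenQ) *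
          (FreeGroup.of (⟨(p * b + a * q, q * b), mul_ne_zero hq hb⟩ : GenQ))⁻¹} ∪
  {g | ∃ (p q n : ℤ) (hq : q ≠ 0) (hn : n ≠ 0),
    g = FreeGroup.of (⟨(p, q), hq⟩ : GenQ) *
          (FreeGroup.of (⟨(n * p, n * q), mul_ne_zero hn hq⟩ : GenQ))⁻¹}

/-!
The relators say precisely that `x_{(p,q)}` depends only on the fraction `p/q` and that the
generators multiply like fractions add. Hence `r ↦ x_{(num r, den r)}` is a homomorphism
`ℚ → ⟨GenQ | relsQ2⟩`, inverse to the map induced by `x_{(p,q)} ↦ p/q`.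
-/

namespace relsQ2

open PresentedGroup

theorem of_mul_of (p q a b : ℤ) (hq : q ≠ 0) (hb : b ≠ 0) :
    (of ⟨(p, q), hq⟩ : PresentedGroup relsQ2) * of ⟨(a, b), hb⟩ =
      of ⟨(p * b + a * q, q * b), mul_ne_zero hq hb⟩ :=
  mk_eq_mk_of_mul_inv_mem (Or.inl ⟨p, q, a, b, hq, hb, rfl⟩)

theorem of_eq_of_mul (p q n : ℤ) (hq : q ≠ 0) (hn : n ≠ 0) :
    (of ⟨(p, q), hq⟩ : PresentedGroup relsQ2) = of ⟨(n * p, n * q), mul_ne_zero hn hq⟩ :=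
  mk_eq_mk_of_mul_inv_mem (Or.inr ⟨p, q, n, hq, hn, rfl⟩)

/-- Both sides equal `x_{(bp, bq)} = x_{(qa, qb)}` by the second family of relators. -/
theorem of_eq_of_div_eq (p q a b : ℤ) (hq : q ≠ 0) (hb : b ≠ 0) (h : (p / q : ℚ) = a / b) :
    (of ⟨(p, q), hq⟩ : PresentedGroup relsQ2) = of ⟨(a, b), hb⟩ := by
  have hcross : b * p = q * a := by
    rw [div_eq_div_iff (by exact_mod_cast hq) (by exact_mod_cast hb)] at h
    exact_mod_cast (by linear_combination h : (b * p : ℚ) = q * a)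
  rw [of_eq_of_mul p q b hq hb, of_eq_of_mul a b q hb hq]
  congr 2
  rw [hcross, mul_comm b q]

theorem lift_ofAdd_div_eq_one :
    ∀ r ∈ relsQ2,
      FreeGroup.lift (fun x : GenQ => Multiplicative.ofAdd (x.1.1 / x.1.2 : ℚ)) r = 1 := by
  rintro r (⟨p, q, a, b, hq, hb, rfl⟩ | ⟨p, q, n, hq, hn, rfl⟩)
  all_goals
    simp only [map_mul, map_inv, FreeGroup.lift_apply_of, mul_inv_eq_one, ← ofAdd_add,
      EmbeddingLike.apply_eq_iff_eq]
    push_cast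
    field_simp

noncomputable def toRat : PresentedGroup relsQ2 →* Multiplicative ℚ :=
  toGroup lift_ofAdd_div_eq_one

theorem toRat_of (x : GenQ) : toRat (of x) = Multiplicative.ofAdd (x.1.1 / x.1.2 : ℚ) :=
  toGroup.of _

noncomputable def ofRat : Multiplicative ℚ →* PresentedGroup relsQ2 :=
  MonoidHom.mk'
    (fun x => of ⟨(x.toAdd.num, x.toAdd.den), Int.natCast_ne_zero.mpr x.toAdd.den_ne_zero⟩)
    fun x y => by
      rw [of_mul_of]
      apply of_eq_of_div_eq
      push_cast
      rw [toAdd_mul, Rat.num_div_den, eq_div_iff (by positivity)]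
      linear_combination (y.toAdd.den : ℚ) * Rat.mul_den_eq_num x.toAdd +
        (x.toAdd.den : ℚ) * Rat.mul_den_eq_num y.toAdd

theorem toRat_comp_ofRat : toRat.comp ofRat = MonoidHom.id _ := by
  ext x
  simp [ofRat, toRat_of, Rat.num_div_den]

theorem ofRat_comp_toRat : ofRat.comp toRat = MonoidHom.id _ := by
  refine PresentedGroup.ext fun x => ?_
  rw [MonoidHom.comp_apply, toRat_of, MonoidHom.id_apply]
  exact of_eq_of_div_eq _ _ _ _ _ _ (Rat.num_div_den _)

end relsQ2

/-- The presented group on the generators `x_{(p,q)}` (`q ≠ 0`) with the above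
relators is isomorphic to the additive group of rationals, via the homomorphism
induced by `x_{(p,q)} ↦ p/q`. -/
theorem presentedGroup_fractions_iso_rat :
    ∃ e : PresentedGroup relsQ2 ≃* Multiplicative ℚ,
      ∀ p : GenQ,
        e (PresentedGroup.of p) = Multiplicative.ofAdd ((p.1.1 : ℚ) / (p.1.2 : ℚ)) :=
  ⟨MonoidHom.toMulEquiv _ _ relsQ2.ofRat_comp_toRat relsQ2.toRat_comp_ofRat, relsQ2.toRat_of⟩
end

section
/- Let P : ℝ → ℚ be a ℚ-linear map (viewing ℝ as a vector space over ℚ) with P(1) = 1. Let the generator set be ℝ (write x_t for the generator indexed by t ∈ ℝ) and let the relator set be R := {x_t · x_s · x_{t+s}^{-1} : t, s ∈ ℝ} ∪ {x_t · x_{(P(t) : ℝ)}^{-1} : t ∈ ℝ}, where (P(t) : ℝ) denotes the rational number P(t) regarded as a real number. Then the presented group ⟨ℝ | R⟩ is isomorphic to the additive group of rational numbers (Multiplicative ℚ), via the homomorphism induced by x_t ↦ P(t). -/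
/-- The relator set `R = {x_t·x_s·x_{t+s}⁻¹ : t,s ∈ ℝ} ∪ {x_t·x_{P(t)}⁻¹ : t ∈ ℝ}`
determined by a `ℚ`-linear projection `P : ℝ → ℚ`. -/
def relsP (P : ℝ →ₗ[ℚ] ℚ) : Set (FreeGroup ℝ) :=
  {g | ∃ t s : ℝ, g = FreeGroup.of t * FreeGroup.of s * (FreeGroup.of (t + s))⁻¹} ∪
  {g | ∃ t : ℝ, g = FreeGroup.of t * (FreeGroup.of ((P t : ℝ)))⁻¹}

/-!
Every relator holds in `Multiplicative ℚ` under `x_t ↦ P t`, because `P` is additive and fixes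
`ℚ ⊆ ℝ` (by `ℚ`-linearity and `P 1 = 1`). Conversely `q ↦ x_q` is a homomorphism from `ℚ`, and
the relators `x_t = x_{P t}` make it the inverse map.
-/

lemma LinearMap.map_ratCast_of_map_one {K : Type*} [DivisionRing K] [CharZero K]
    {P : K →ₗ[ℚ] ℚ} (hP : P 1 = 1) (q : ℚ) : P q = q := by
  rw [← Rat.smul_one_eq_cast K, map_smul, hP, smul_eq_mul, mul_one]

namespace PresentedGroup

section

variable (P : ℝ →ₗ[ℚ] ℚ)

lemma of_add_relsP (t s : ℝ) :
    (of (t + s) : PresentedGroup (relsP P)) = of t * of s :=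
  (mk_eq_mk_of_mul_inv_mem (Or.inl ⟨t, s, rfl⟩)).symm

lemma of_eq_of_relsP (t : ℝ) : (of t : PresentedGroup (relsP P)) = of (P t : ℝ) :=
  mk_eq_mk_of_mul_inv_mem (Or.inr ⟨t, rfl⟩)

def ofRat : Multiplicative ℚ →* PresentedGroup (relsP P) where
  toFun q := of (q.toAdd : ℝ)
  map_one' := by simpa using (of_add_relsP P 0 0).symm
  map_mul' q r := by simpa using of_add_relsP P q.toAdd r.toAdd

end

variable {P : ℝ →ₗ[ℚ] ℚ}

lemma lift_ofAdd_relsP_eq_one (hP : P 1 = 1) :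
    ∀ r ∈ relsP P, FreeGroup.lift (fun t : ℝ => Multiplicative.ofAdd (P t)) r = 1 := by
  rintro r (⟨t, s, rfl⟩ | ⟨t, rfl⟩) <;>
    simp [← ofAdd_add, LinearMap.map_ratCast_of_map_one hP]

noncomputable def toRat (hP : P 1 = 1) : PresentedGroup (relsP P) →* Multiplicative ℚ :=
  toGroup (lift_ofAdd_relsP_eq_one hP)

lemma toRat_of (hP : P 1 = 1) (t : ℝ) : toRat hP (of t) = Multiplicative.ofAdd (P t) :=
  toGroup.of _

end PresentedGroup

/-- For a `ℚ`-linear map `P : ℝ → ℚ` with `P 1 = 1`, the presented group `⟨ℝ | R⟩`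
is isomorphic to the additive group of rationals, via the homomorphism induced by
`x_t ↦ P(t)`. -/
theorem presentedGroup_proj_iso_rat (P : ℝ →ₗ[ℚ] ℚ) (hP : P 1 = 1) :
    ∃ e : PresentedGroup (relsP P) ≃* Multiplicative ℚ,
      ∀ t : ℝ, e (PresentedGroup.of t) = Multiplicative.ofAdd (P t) := by
  refine ⟨(PresentedGroup.toRat hP).toMulEquiv (PresentedGroup.ofRat P) ?_ ?_,
    PresentedGroup.toRat_of hP⟩
  · ext t
    simp [PresentedGroup.toRat_of, PresentedGroup.ofRat, ← PresentedGroup.of_eq_of_relsP]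
  · ext q
    simp [PresentedGroup.toRat_of, PresentedGroup.ofRat, LinearMap.map_ratCast_of_map_one hP]
end

section
/- Let the generator set be ℝ (write x_r for the generator indexed by r ∈ ℝ) and let the relator set be R := {x_{n·r} · x_r^{-1} : r ∈ ℝ, n ∈ ℕ, n ≥ 1} ∪ {x_{r+k} · x_r^{-1} : r ∈ ℝ, k ∈ ℤ} (identifying x_{n·r} with x_r and x_{r+k} with x_r). Then in the presented group ⟨ℝ | R⟩, the image of the generator x_r equals the image of the generator x_0 if and only if r is rational. -/
/-!
Relators of the form `x_a x_b⁻¹` can only identify generators that are both rational or both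
irrational, since multiplying by `n ≥ 1` and adding an integer preserve rationality; hence the
map sending irrational generators to `1 ∈ ℤ/2` and rational ones to `0` factors
through the presented group and separates `x_r` from `x_0` for irrational `r`. Conversely, with
`r = p/q` in lowest terms, the relators give `x_r = x_{q r} = x_p = x_{0 + p} = x_0`.
-/

/-- The relator set `R = {x_{n·r}·x_r⁻¹ : r ∈ ℝ, 1 ≤ n ∈ ℕ} ∪ {x_{r+k}·x_r⁻¹ : r ∈ ℝ, k ∈ ℤ}`. -/
def relsRat : Set (FreeGroup ℝ) :=
  {g | ∃ (r : ℝ) (n : ℕ), 1 ≤ n ∧ g = FreeGroup.of ((n : ℝ) * r) * (FreeGroup.of r)⁻¹} ∪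
  {g | ∃ (r : ℝ) (k : ℤ), g = FreeGroup.of (r + (k : ℝ)) * (FreeGroup.of r)⁻¹}

namespace PresentedGroup

variable {α : Type*} {rels : Set (FreeGroup α)}

theorem of_eq_of_mul_inv_mem {a b : α} (h : FreeGroup.of a * (FreeGroup.of b)⁻¹ ∈ rels) :
    (of a : PresentedGroup rels) = of b :=
  mk_eq_mk_of_mul_inv_mem h

theorem mem_iff_mem_of_of_eq (S : Set α)
    (hS : ∀ g ∈ rels, ∃ a b, g = FreeGroup.of a * (FreeGroup.of b)⁻¹ ∧ (a ∈ S ↔ b ∈ S))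
    {a b : α} (h : (of a : PresentedGroup rels) = of b) : a ∈ S ↔ b ∈ S := by
  classical
  let mark : α → Multiplicative (ZMod 2) := fun x => .ofAdd (if x ∈ S then 0 else 1)
  have mark_eq_iff : ∀ x y, mark x = mark y ↔ (x ∈ S ↔ y ∈ S) := by
    intro x y
    by_cases hx : x ∈ S <;> by_cases hy : y ∈ S <;> simp [mark, hx, hy, -ofAdd_zero]
  have hrels : ∀ g ∈ rels, FreeGroup.lift mark g = 1 := by
    intro g hg
    obtain ⟨a, b, rfl, hab⟩ := hS g hg
    simp only [map_mul, map_inv, FreeGroup.lift_apply_of, (mark_eq_iff a b).mpr hab,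
      mul_inv_cancel]
  refine (mark_eq_iff a b).mp ?_
  simpa only [toGroup.of] using congrArg (toGroup hrels) h

end PresentedGroup

theorem natCast_mul_mem_range_ratCast_iff {n : ℕ} (hn : n ≠ 0) {x : ℝ} :
    (n : ℝ) * x ∈ Set.range ((↑) : ℚ → ℝ) ↔ x ∈ Set.range ((↑) : ℚ → ℝ) :=
  not_iff_not.mp <| irrational_natCast_mul_iff.trans (and_iff_right hn)

theorem add_intCast_mem_range_ratCast_iff (k : ℤ) {x : ℝ} :
    x + k ∈ Set.range ((↑) : ℚ → ℝ) ↔ x ∈ Set.range ((↑) : ℚ → ℝ) :=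
  not_iff_not.mp irrational_add_intCast_iff

theorem relsRat_preserve_rational :
    ∀ g ∈ relsRat, ∃ a b, g = FreeGroup.of a * (FreeGroup.of b)⁻¹ ∧
      (a ∈ Set.range ((↑) : ℚ → ℝ) ↔ b ∈ Set.range ((↑) : ℚ → ℝ)) := by
  rintro g (⟨r, n, hn, rfl⟩ | ⟨r, k, rfl⟩)
  · exact ⟨_, _, rfl, natCast_mul_mem_range_ratCast_iff (by omega)⟩
  · exact ⟨_, _, rfl, add_intCast_mem_range_ratCast_iff k⟩

/-- In the presented group `⟨ℝ | R⟩`, the image of the generator `x_r` equals the image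
of the generator `x_0` if and only if `r` is rational. -/
theorem of_eq_of_zero_iff_rational (r : ℝ) :
    (PresentedGroup.of (rels := relsRat) r = PresentedGroup.of 0) ↔
      r ∈ Set.range ((↑) : ℚ → ℝ) := by
  constructor
  · exact fun h ↦
      (PresentedGroup.mem_iff_mem_of_of_eq _ relsRat_preserve_rational h).mpr ⟨0, Rat.cast_zero⟩
  · rintro ⟨q, rfl⟩
    have den_mul : (q.den : ℝ) * q = q.num := by exact_mod_cast q.den_mul_eq_num
    calc PresentedGroup.of (rels := relsRat) (q : ℝ)
        = PresentedGroup.of ((q.den : ℝ) * q) :=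
          (PresentedGroup.of_eq_of_mul_inv_mem (Or.inl ⟨q, q.den, q.pos, rfl⟩)).symm
      _ = PresentedGroup.of (0 + (q.num : ℝ)) := by rw [den_mul, zero_add]
      _ = PresentedGroup.of 0 := PresentedGroup.of_eq_of_mul_inv_mem (Or.inr ⟨0, q.num, rfl⟩)
end

section
/- Fix natural numbers D ≥ 1 and i with 1 ≤ i ≤ D, and a real number α. Let W be the subgroup of FreeGroup(X) generated by {w_r : r ∈ ℝ^D, r_i = α}, and let L be the subgroup of C generated by π(w_{(0,…,0,α,0,…,0)}) (the tuple with α in position i and 0 elsewhere) together with the images in C of all generators a_{(ℓ,s)} with s ∈ ℝ and ℓ ∈ ℕ, ℓ ≠ i. Then the preimage of L under π (Subgroup.comap π L) equals W. -/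
/-- The generating set `X = {x_{(i,s)} : i ∈ ℕ, s ∈ ℝ} ∪ {y}`. -/
abbrev XT : Type := (ℕ × ℝ) ⊕ Unit

/-- Generators of the presented group `C`: the generators of `X`, together with the
stable letters `a_{(i,t)}` (`i ∈ ℕ`, `t ∈ ℝ`) and `m_{(i,t)}` (`i ∈ ℕ`, `t ≠ 0`). -/
abbrev GenC : Type := XT ⊕ ((ℕ × ℝ) ⊕ (ℕ × {t : ℝ // t ≠ 0}))

def xc (p : ℕ × ℝ) : FreeGroup GenC := FreeGroup.of (Sum.inl (Sum.inl p))
def yc : FreeGroup GenC := FreeGroup.of (Sum.inl (Sum.inr ()))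
def ac (p : ℕ × ℝ) : FreeGroup GenC := FreeGroup.of (Sum.inr (Sum.inl p))
def mcg (i : ℕ) (t : {t : ℝ // t ≠ 0}) : FreeGroup GenC :=
  FreeGroup.of (Sum.inr (Sum.inr (i, t)))

/-- The relators of `C`: `a_{(i,t)}` conjugates `x_{(i,s)}` to `x_{(i,s+t)}` and
commutes with the remaining generators of `X`; `m_{(i,t)}` (`t ≠ 0`) conjugates
`x_{(i,s)}` to `x_{(i,s·t)}` and commutes with the remaining generators of `X`. -/
def relsC : Set (FreeGroup GenC) :=
  {g | ∃ (i : ℕ) (s t : ℝ), g = ac (i, t) * xc (i, s) * (ac (i, t))⁻¹ * (xc (i, s + t))⁻¹} ∪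
  {g | ∃ (i j : ℕ) (s t : ℝ), j ≠ i ∧
        g = ac (i, t) * xc (j, s) * (ac (i, t))⁻¹ * (xc (j, s))⁻¹} ∪
  {g | ∃ (i : ℕ) (t : ℝ), g = ac (i, t) * yc * (ac (i, t))⁻¹ * yc⁻¹} ∪
  {g | ∃ (i : ℕ) (s : ℝ) (t : {t : ℝ // t ≠ 0}),
        g = mcg i t * xc (i, s) * (mcg i t)⁻¹ * (xc (i, s * t.1))⁻¹} ∪
  {g | ∃ (i j : ℕ) (s : ℝ) (t : {t : ℝ // t ≠ 0}), j ≠ i ∧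
        g = mcg i t * xc (j, s) * (mcg i t)⁻¹ * (xc (j, s))⁻¹} ∪
  {g | ∃ (i : ℕ) (t : {t : ℝ // t ≠ 0}), g = mcg i t * yc * (mcg i t)⁻¹ * yc⁻¹}

/-- The presented group `C`. -/
abbrev Cgrp : Type := PresentedGroup relsC

/-- The homomorphism `π : FreeGroup X →* C` induced by the inclusion of generators. -/
noncomputable def piC : FreeGroup XT →* Cgrp :=
  FreeGroup.lift fun g => PresentedGroup.of (Sum.inl g)

/-- The image in `C` of the stable letter `a_{(i,t)}`. -/
def aC (p : ℕ × ℝ) : Cgrp := PresentedGroup.of (Sum.inr (Sum.inl p))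

def xX (p : ℕ × ℝ) : FreeGroup XT := FreeGroup.of (Sum.inl p)
def yX : FreeGroup XT := FreeGroup.of (Sum.inr ())

/-- The word `x_{(1,r_1)} ⋯ x_{(D,r_D)}` for a tuple `r ∈ ℝ^D`. -/
def cD {D : ℕ} (r : Fin D → ℝ) : FreeGroup XT :=
  (List.ofFn fun i : Fin D => xX ((i : ℕ) + 1, r i)).prod

/-- The word `w_r = x_{(D,r_D)}⁻¹ ⋯ x_{(1,r_1)}⁻¹ · y · x_{(1,r_1)} ⋯ x_{(D,r_D)}`. -/
def wD {D : ℕ} (r : Fin D → ℝ) : FreeGroup XT := (cD r)⁻¹ * yX * cD r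


/-!
The relators of `C` say exactly that every stable letter `b` conjugates each `x ∈ X` to
`σ_b x`, where `σ_b` is a shift (`a`) or a scaling (`m`) of one coordinate. Hence `C` maps
to `F(X) ⋊ F(B)`, with `b` acting through `σ_b`, and `π` becomes the inclusion of `F(X)`.
Shifting a coordinate `ℓ ≠ i` permutes the generators `w_r` of `W`, so the subgroup `K`
generated by these letters preserves `W`, and `W ⋊ K` is a subgroup containing the image
of `L`; pulling it back along `F(X) → F(X) ⋊ F(B)` gives `π⁻¹(L) ≤ W`. Conversely,
`a_{(ℓ,t)} π(w_r) a_{(ℓ,t)}⁻¹ = π(w_{r'})` with `r'` the tuple `r` with `t` added to `r_ℓ`,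
and for `ℓ ≠ i` such shifts carry `(0,…,α,…,0)` to every `r` with `r_i = α`.
-/

section ConjugationPresentation

variable {X B : Type*} (σ : B → Equiv.Perm X)

def conjRels : Set (FreeGroup (X ⊕ B)) :=
  Set.range fun p : B × X =>
    FreeGroup.of (Sum.inr p.1) * FreeGroup.of (Sum.inl p.2) * (FreeGroup.of (Sum.inr p.1))⁻¹ *
      (FreeGroup.of (Sum.inl (σ p.1 p.2)))⁻¹

def permAction : FreeGroup B →* MulAut (FreeGroup X) :=
  FreeGroup.lift fun b => FreeGroup.freeGroupCongr (σ b)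

theorem permAction_of_apply (b : B) (u : FreeGroup X) :
    permAction σ (FreeGroup.of b) u = FreeGroup.map (σ b) u := by
  simp [permAction]

variable {σ} {rels : Set (FreeGroup (X ⊕ B))}

def toSemidirect (h : rels ⊆ conjRels σ) :
    PresentedGroup rels →* FreeGroup X ⋊[permAction σ] FreeGroup B :=
  PresentedGroup.toGroup (f := Sum.elim (fun x => .inl (.of x)) (fun b => .inr (.of b))) <| by
    rintro _ hr
    obtain ⟨⟨b, x⟩, rfl⟩ := h hr
    simp only [map_mul, map_inv, FreeGroup.lift_apply_of, Sum.elim_inl, Sum.elim_inr]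
    rw [mul_inv_eq_one, ← map_inv, ← SemidirectProduct.inl_aut, permAction_of_apply,
      FreeGroup.map.of]

theorem toSemidirect_lift_inl (h : rels ⊆ conjRels σ) (u : FreeGroup X) :
    toSemidirect h (FreeGroup.lift (fun x => PresentedGroup.of (Sum.inl x)) u) =
      SemidirectProduct.inl u := by
  induction u using FreeGroup.induction_on with
  | C1 => simp
  | of x => simp [toSemidirect, PresentedGroup.toGroup.of]
  | inv_of x ih => simp_all
  | mul u v hu hv => simp_all

theorem toSemidirect_of_inr (h : rels ⊆ conjRels σ) (b : B) :
    toSemidirect h (PresentedGroup.of (Sum.inr b)) = SemidirectProduct.inr (FreeGroup.of b) := by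
  simp [toSemidirect, PresentedGroup.toGroup.of]

theorem of_inr_mul_lift_inl_mul_inv (h : conjRels σ ⊆ rels) (b : B) (u : FreeGroup X) :
    PresentedGroup.of (Sum.inr b) * FreeGroup.lift (fun x => PresentedGroup.of (Sum.inl x)) u *
        (PresentedGroup.of (Sum.inr b))⁻¹ =
      FreeGroup.lift (fun x => PresentedGroup.of (rels := rels) (Sum.inl x))
        (FreeGroup.map (σ b) u) := by
  suffices (MulAut.conj (PresentedGroup.of (Sum.inr b))).toMonoidHom.comp
      (FreeGroup.lift fun x => PresentedGroup.of (Sum.inl x)) =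
      (FreeGroup.lift fun x => PresentedGroup.of (Sum.inl x)).comp (FreeGroup.map (σ b)) from
    DFunLike.congr_fun this u
  refine FreeGroup.ext_hom _ _ fun x => ?_
  have hrel := PresentedGroup.mk_eq_mk_of_mul_inv_mem (h ⟨(b, x), rfl⟩)
  simp only [map_mul, map_inv] at hrel
  simp only [MonoidHom.comp_apply, FreeGroup.lift_apply_of, FreeGroup.map.of,
    MulEquiv.coe_toMonoidHom, MulAut.conj_apply]
  exact hrel

end ConjugationPresentation

namespace SemidirectProduct

variable {N G : Type*} [Group N] [Group G] {φ : G →* MulAut N}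

def prodSubgroup (W : Subgroup N) (K : Subgroup G) (hK : ∀ k ∈ K, ∀ n ∈ W, φ k n ∈ W) :
    Subgroup (N ⋊[φ] G) where
  carrier := {h | h.left ∈ W ∧ h.right ∈ K}
  one_mem' := ⟨W.one_mem, K.one_mem⟩
  mul_mem' := fun ⟨ha, ka⟩ ⟨hb, kb⟩ => ⟨W.mul_mem ha (hK _ ka _ hb), K.mul_mem ka kb⟩
  inv_mem' := fun ⟨ha, ka⟩ => ⟨hK _ (K.inv_mem ka) _ (W.inv_mem ha), K.inv_mem ka⟩

open scoped Pointwise in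
theorem apply_mem_of_mem_closure {S : Set G} {W : Subgroup N} (hS : ∀ s ∈ S, φ s • W = W)
    {k : G} (hk : k ∈ Subgroup.closure S) {n : N} (hn : n ∈ W) : φ k n ∈ W := by
  have hstab : Subgroup.closure S ≤ (MulAction.stabilizer (MulAut N) W).comap φ :=
    Subgroup.closure_le _ |>.2 hS
  rw [← (hstab hk : φ k • W = W)]
  exact Subgroup.smul_mem_pointwise_smul n (φ k) W hn

end SemidirectProduct

open Function in
theorem Set.mem_of_forall_update_mem {ι β : Type*} [Fintype ι] [DecidableEq ι] {T : Set (ι → β)}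
    {p : ι → Prop} {r₀ r : ι → β} (h₀ : r₀ ∈ T)
    (hT : ∀ f ∈ T, ∀ j, p j → ∀ x, update f j x ∈ T) (hr : ∀ j, ¬p j → r j = r₀ j) : r ∈ T := by
  suffices ∀ F : Finset ι, F.piecewise r r₀ ∈ T by simpa using this Finset.univ
  intro F
  induction F using Finset.induction_on with
  | empty => simpa using h₀
  | insert j F hj ih =>
    rw [Finset.piecewise_insert]
    by_cases hpj : p j
    · exact hT _ ih j hpj _
    · rwa [hr j hpj, ← Finset.piecewise_eq_of_notMem F r r₀ hj, update_eq_self]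

abbrev StableLetter : Type := (ℕ × ℝ) ⊕ (ℕ × {t : ℝ // t ≠ 0})

def coordPerm (e : ℕ → Equiv.Perm ℝ) : Equiv.Perm XT :=
  Equiv.sumCongr (Equiv.prodShear (Equiv.refl ℕ) e) (Equiv.refl Unit)

@[simp]
theorem coordPerm_inl (e : ℕ → Equiv.Perm ℝ) (j : ℕ) (s : ℝ) :
    coordPerm e (Sum.inl (j, s)) = Sum.inl (j, e j s) :=
  rfl

@[simp]
theorem coordPerm_inr (e : ℕ → Equiv.Perm ℝ) (u : Unit) : coordPerm e (Sum.inr u) = Sum.inr u :=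
  rfl

noncomputable def letterPerm : StableLetter → Equiv.Perm XT
  | .inl (ℓ, t) => coordPerm (Pi.mulSingle ℓ (Equiv.addRight t))
  | .inr (ℓ, t) => coordPerm (Pi.mulSingle ℓ (Equiv.mulRight₀ t.1 t.2))

theorem relsC_eq : relsC = conjRels letterPerm := by
  ext ρ
  constructor
  · rintro (((((⟨ℓ, s, t, rfl⟩ | ⟨ℓ, j, s, t, hj, rfl⟩) | ⟨ℓ, t, rfl⟩) |
        ⟨ℓ, s, t, rfl⟩) | ⟨ℓ, j, s, t, hj, rfl⟩) | ⟨ℓ, t, rfl⟩)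
    · exact ⟨(.inl (ℓ, t), .inl (ℓ, s)), by simp [letterPerm, ac, xc]⟩
    · exact ⟨(.inl (ℓ, t), .inl (j, s)), by simp [letterPerm, ac, xc, hj]⟩
    · exact ⟨(.inl (ℓ, t), .inr ()), by simp [letterPerm, ac, yc]⟩
    · exact ⟨(.inr (ℓ, t), .inl (ℓ, s)), by simp [letterPerm, mcg, xc]⟩
    · exact ⟨(.inr (ℓ, t), .inl (j, s)), by simp [letterPerm, mcg, xc, hj]⟩
    · exact ⟨(.inr (ℓ, t), .inr ()), by simp [letterPerm, mcg, yc]⟩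
  · rintro ⟨⟨⟨ℓ, t⟩ | ⟨ℓ, t⟩, ⟨j, s⟩ | ⟨⟩⟩, rfl⟩
    · by_cases hj : j = ℓ
      · subst hj
        exact Or.inl <| Or.inl <| Or.inl <| Or.inl <| Or.inl
          ⟨j, s, t, by simp [letterPerm, ac, xc]⟩
      · exact Or.inl <| Or.inl <| Or.inl <| Or.inl <| Or.inr
          ⟨ℓ, j, s, t, hj, by simp [letterPerm, ac, xc, hj]⟩
    · exact Or.inl <| Or.inl <| Or.inl <| Or.inr ⟨ℓ, t, by simp [letterPerm, ac, yc]⟩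
    · by_cases hj : j = ℓ
      · subst hj
        exact Or.inl <| Or.inl <| Or.inr ⟨j, s, t, by simp [letterPerm, mcg, xc]⟩
      · exact Or.inl <| Or.inr ⟨ℓ, j, s, t, hj, by simp [letterPerm, mcg, xc, hj]⟩
    · exact Or.inr ⟨ℓ, t, by simp [letterPerm, mcg, yc]⟩

theorem map_coordPerm_wD (e : ℕ → Equiv.Perm ℝ) {D : ℕ} (r : Fin D → ℝ) :
    FreeGroup.map (coordPerm e) (wD r) = wD fun k => e ((k : ℕ) + 1) (r k) := by
  simp [wD, cD, yX, xX, map_list_prod, List.map_ofFn, Function.comp_def]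

def wGens (D i : ℕ) (α : ℝ) : Set (FreeGroup XT) :=
  {g | ∃ r : Fin D → ℝ, (∀ j : Fin D, (j : ℕ) + 1 = i → r j = α) ∧ g = wD r}

theorem image_map_coordPerm_wGens {D i : ℕ} {α : ℝ} {e : ℕ → Equiv.Perm ℝ} (he : e i = 1) :
    FreeGroup.map (coordPerm e) '' wGens D i α = wGens D i α := by
  have shift_mem : ∀ e : ℕ → Equiv.Perm ℝ, e i = 1 → ∀ r : Fin D → ℝ,
      (∀ j : Fin D, (j : ℕ) + 1 = i → r j = α) →
      ∀ j : Fin D, (j : ℕ) + 1 = i → e ((j : ℕ) + 1) (r j) = α := by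
    intro e he r hr j hj
    rw [hj, he, Equiv.Perm.one_apply, hr j hj]
  apply subset_antisymm
  · rintro _ ⟨_, ⟨r, hr, rfl⟩, rfl⟩
    exact ⟨_, shift_mem e he r hr, map_coordPerm_wD e r⟩
  · rintro _ ⟨r, hr, rfl⟩
    refine ⟨_, ⟨_, shift_mem e⁻¹ (by simp [he]) r hr, rfl⟩, ?_⟩
    simp [map_coordPerm_wD]

def lGens (D i : ℕ) (α : ℝ) : Set Cgrp :=
  {piC (wD fun j : Fin D => if (j : ℕ) + 1 = i then α else 0)} ∪
    {g : Cgrp | ∃ (ℓ : ℕ) (s : ℝ), ℓ ≠ i ∧ g = aC (ℓ, s)}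

theorem aC_mul_piC_mul_inv (p : ℕ × ℝ) (u : FreeGroup XT) :
    aC p * piC u * (aC p)⁻¹ = piC (FreeGroup.map (letterPerm (.inl p)) u) :=
  of_inr_mul_lift_inl_mul_inv relsC_eq.ge (.inl p) u

theorem piC_wD_update {D : ℕ} (r : Fin D → ℝ) (j : Fin D) (x : ℝ) :
    piC (wD (Function.update r j x)) =
      aC ((j : ℕ) + 1, x - r j) * piC (wD r) * (aC ((j : ℕ) + 1, x - r j))⁻¹ := by
  rw [aC_mul_piC_mul_inv, letterPerm, map_coordPerm_wD]
  congr 2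
  ext k
  by_cases hk : k = j
  · subst hk
    simp
  · simp [hk, Fin.val_inj]

theorem closure_wGens_le_comap (D i : ℕ) (α : ℝ) :
    Subgroup.closure (wGens D i α) ≤ (Subgroup.closure (lGens D i α)).comap piC := by
  rw [Subgroup.closure_le]
  rintro _ ⟨r, hr, rfl⟩
  refine Set.mem_of_forall_update_mem (T := {r | piC (wD r) ∈ Subgroup.closure (lGens D i α)})
    (p := fun j => (j : ℕ) + 1 ≠ i) (Subgroup.subset_closure (Or.inl rfl)) ?_ ?_
  · intro f hf j hj x
    have ha : aC ((j : ℕ) + 1, x - f j) ∈ Subgroup.closure (lGens D i α) :=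
      Subgroup.subset_closure (Or.inr ⟨_, _, hj, rfl⟩)
    simp only [Set.mem_ofPred_eq, piC_wD_update]
    exact mul_mem (mul_mem ha hf) (inv_mem ha)
  · intro j hj
    rw [not_not] at hj
    simp [hj, hr j hj]

theorem permAction_apply_mem_closure_wGens {D i : ℕ} {α : ℝ} {k : FreeGroup StableLetter}
    (hk : k ∈ Subgroup.closure {b | ∃ (ℓ : ℕ) (s : ℝ), ℓ ≠ i ∧ b = FreeGroup.of (.inl (ℓ, s))})
    {n : FreeGroup XT} (hn : n ∈ Subgroup.closure (wGens D i α)) :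
    permAction letterPerm k n ∈ Subgroup.closure (wGens D i α) := by
  refine SemidirectProduct.apply_mem_of_mem_closure ?_ hk hn
  rintro _ ⟨ℓ, s, hℓ, rfl⟩
  rw [Subgroup.smul_closure, ← Set.image_smul]
  simp only [MulAut.smul_def, permAction_of_apply]
  rw [letterPerm, image_map_coordPerm_wGens (Pi.mulSingle_eq_of_ne hℓ.symm _)]

theorem comap_le_closure_wGens (D i : ℕ) (α : ℝ) :
    (Subgroup.closure (lGens D i α)).comap piC ≤ Subgroup.closure (wGens D i α) := by
  let K : Subgroup (FreeGroup StableLetter) :=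
    Subgroup.closure {b | ∃ (ℓ : ℕ) (s : ℝ), ℓ ≠ i ∧ b = FreeGroup.of (.inl (ℓ, s))}
  let P := SemidirectProduct.prodSubgroup (Subgroup.closure (wGens D i α)) K
    fun _ hk _ hn => permAction_apply_mem_closure_wGens hk hn
  have hL : Subgroup.closure (lGens D i α) ≤ P.comap (toSemidirect relsC_eq.le) := by
    rw [Subgroup.closure_le]
    rintro _ (rfl | ⟨ℓ, s, hℓ, rfl⟩)
    · show toSemidirect _ (piC _) ∈ P
      rw [piC, toSemidirect_lift_inl]
      exact ⟨Subgroup.subset_closure ⟨_, fun j hj => if_pos hj, rfl⟩, K.one_mem⟩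
    · show toSemidirect _ (aC _) ∈ P
      rw [aC, toSemidirect_of_inr]
      exact ⟨Subgroup.one_mem _, Subgroup.subset_closure ⟨ℓ, s, hℓ, rfl⟩⟩
  intro g hg
  have hP : toSemidirect relsC_eq.le (piC g) ∈ P := hL hg
  rw [piC, toSemidirect_lift_inl] at hP
  exact hP.1

theorem comap_piC_closure_const_eq_general
    (D i : ℕ) (α : ℝ) :
    Subgroup.comap piC
        (Subgroup.closure
          ({piC (wD fun j : Fin D => if (j : ℕ) + 1 = i then α else 0)} ∪
           {g : Cgrp | ∃ (ℓ : ℕ) (s : ℝ), ℓ ≠ i ∧ g = aC (ℓ, s)})) =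
      Subgroup.closure
        {g : FreeGroup XT |
          ∃ r : Fin D → ℝ, (∀ j : Fin D, (j : ℕ) + 1 = i → r j = α) ∧ g = wD r} :=
  le_antisymm (comap_le_closure_wGens D i α) (closure_wGens_le_comap D i α)

/-- For the assignment `x_i ← α` (`1 ≤ i ≤ D`): with `W` the subgroup of `FreeGroup X`
generated by `{w_r : r ∈ ℝ^D, r_i = α}` and `L` the subgroup of `C` generated by
`π(w_{(0,…,α,…,0)})` (`α` in position `i`) together with all `a_{(ℓ,s)}` with `ℓ ≠ i`,
we have `π⁻¹(L) = W`. -/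
theorem comap_piC_closure_const_eq
    (D i : ℕ) (α : ℝ) (hi : 1 ≤ i) (hiD : i ≤ D) :
    Subgroup.comap piC
        (Subgroup.closure
          ({piC (wD fun j : Fin D => if (j : ℕ) + 1 = i then α else 0)} ∪
           {g : Cgrp | ∃ (ℓ : ℕ) (s : ℝ), ℓ ≠ i ∧ g = aC (ℓ, s)})) =
      Subgroup.closure
        {g : FreeGroup XT |
          ∃ r : Fin D → ℝ, (∀ j : Fin D, (j : ℕ) + 1 = i → r j = α) ∧ g = wD r} :=
  comap_piC_closure_const_eq_general D i α
end
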